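/- arXiv:2002.08615 — 7 statements merged into one kernel-verified Lean document; each statement's English description precedes it below -/
import Mathlib

section
/- For all real parameters α > -1/2 and β > -1/2, every nonnegative integer ℓ, and every real x with -1 ≤ x < 1, one has Σ_{k=0}^{ℓ} (2k+α+β+1) · (Γ(k+α+β+1)/Γ(k+β+1)) · P_k^{(α,β)}(x) = (Γ(ℓ+α+β+2)/Γ(ℓ+β+1)) · P_ℓ^{(α+1,β)}(x). -/
open Real MeasureTheory

/-- Generalized binomial coefficient `C(a, j) = a(a-1)⋯(a-j+1)/j!`. -/
noncomputable def genBinom (a : ℝ) (j : ℕ) : ℝ :=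
  (∏ i ∈ Finset.range j, (a - i)) / (Nat.factorial j)

/-- Jacobi polynomial `P_ℓ^{(α,β)}(x)`. -/
noncomputable def jacobiP (α β : ℝ) (l : ℕ) (x : ℝ) : ℝ :=
  ∑ k ∈ Finset.range (l + 1),
    genBinom ((l : ℝ) + α) (l - k) * genBinom ((l : ℝ) + β) k *
      ((x - 1) / 2) ^ k * ((x + 1) / 2) ^ (l - k)

/-- Gegenbauer (ultraspherical) polynomial `C_m^{(λ)}(x)`. -/
noncomputable def gegenbauerC (m : ℕ) (lam : ℝ) (x : ℝ) : ℝ :=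
  ∑ k ∈ Finset.range (m / 2 + 1),
    (-1 : ℝ) ^ k *
      (Real.Gamma (lam + m - k) /
        (Real.Gamma lam * (Nat.factorial k) * (Nat.factorial (m - 2 * k)))) *
      (2 * x) ^ (m - 2 * k)

/-- Pochhammer symbol `(q)_k = q(q+1)⋯(q+k-1)`. -/
noncomputable def poch (q : ℝ) (k : ℕ) : ℝ := ∏ i ∈ Finset.range k, (q + i)

/-- Terminating Gauss hypergeometric function `₂F₁(-m, b; c; z)`. -/
noncomputable def hyp2F1 (m : ℕ) (b c z : ℝ) : ℝ :=
  ∑ k ∈ Finset.range (m + 1),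
    poch (-(m : ℝ)) k * poch b k / (poch c k * (Nat.factorial k)) * z ^ k

/-- The operator `(Df)(u) = -(1/sin u) f'(u)`. -/
noncomputable def Dop (f : ℝ → ℝ) : ℝ → ℝ := fun u => -(1 / Real.sin u) * deriv f u


/-!
With `v = (x + 1) / 2` and `u = (x - 1) / 2`, the Jacobi polynomial `P_n^{(α,β)}` is the binary
form `∑_{i+j=n} C(n+α, i) C(n+β, j) vⁱ uʲ`. Since `v - u = 1`, the polynomial `P_n^{(α+1,β)}` can
be homogenized to degree `n + 1`, and comparing coefficients (Pascal's rule and absorption for the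
generalized binomial coefficients) yields the contiguous relation `jacobiP_contiguous`. Multiplied
by `Γ(n+α+β+2) / Γ(n+β+2)` it says that the partial sums telescope to the right-hand side.
-/

open Finset

theorem genBinom_zero_right (a : ℝ) : genBinom a 0 = 1 := by simp [genBinom]

theorem succ_mul_genBinom_succ (a : ℝ) (j : ℕ) :
    ((j : ℝ) + 1) * genBinom a (j + 1) = (a - j) * genBinom a j := by
  simp only [genBinom, prod_range_succ, Nat.factorial_succ, Nat.cast_mul, Nat.cast_succ]
  field_simp

theorem succ_mul_genBinom_add_one_succ (a : ℝ) (j : ℕ) :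
    ((j : ℝ) + 1) * genBinom (a + 1) (j + 1) = (a + 1) * genBinom a j := by
  simp only [genBinom, prod_range_succ', Nat.factorial_succ, Nat.cast_mul, Nat.cast_succ,
    add_sub_add_right_eq_sub, Nat.cast_zero, sub_zero]
  field_simp

theorem genBinom_add_one_succ (a : ℝ) (j : ℕ) :
    genBinom (a + 1) (j + 1) = genBinom a (j + 1) + genBinom a j := by
  apply mul_left_cancel₀ (by positivity : (j : ℝ) + 1 ≠ 0)
  linear_combination succ_mul_genBinom_add_one_succ a j - succ_mul_genBinom_succ a j

theorem add_one_sub_mul_genBinom_sub_genBinom (a : ℝ) (i : ℕ) :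
    (a + 1 - i) * (genBinom (a + 1) i - genBinom a i) = i * genBinom a i := by
  cases i with
  | zero => simp [genBinom_zero_right]
  | succ i =>
    rw [genBinom_add_one_succ]
    push_cast
    linear_combination -succ_mul_genBinom_succ a i

theorem add_one_mul_genBinom (a : ℝ) (j : ℕ) :
    (a + 1) * genBinom a j = (a + 1 - j) * genBinom (a + 1) j := by
  cases j with
  | zero => simp [genBinom_zero_right]
  | succ j =>
    apply mul_left_cancel₀ (by positivity : (j : ℝ) + 1 ≠ 0)
    push_cast
    linear_combination (a + 1) * succ_mul_genBinom_succ a j -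
      (a - j) * succ_mul_genBinom_add_one_succ a j

theorem jacobiP_eq_sum_antidiagonal (α β : ℝ) (n : ℕ) (x : ℝ) :
    jacobiP α β n x = ∑ p ∈ antidiagonal n, genBinom (n + α) p.1 * genBinom (n + β) p.2 *
      ((x + 1) / 2) ^ p.1 * ((x - 1) / 2) ^ p.2 := by
  rw [← Nat.sum_antidiagonal_swap]
  simp only [Prod.fst_swap, Prod.snd_swap]
  rw [Nat.sum_antidiagonal_eq_sum_range_succ
    (fun j i => genBinom (n + α) i * genBinom (n + β) j * ((x + 1) / 2) ^ i * ((x - 1) / 2) ^ j),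
    jacobiP]
  exact sum_congr rfl fun k _ => by ring

section Shift

variable {R : Type*} [CommSemiring R] (c : ℕ → ℕ → R) (v u : R) (n : ℕ)

theorem mul_sum_antidiagonal_shift_fst (hc : ∀ j, c 0 j = 0) :
    v * ∑ p ∈ antidiagonal n, c (p.1 + 1) p.2 * v ^ p.1 * u ^ p.2
      = ∑ p ∈ antidiagonal (n + 1), c p.1 p.2 * v ^ p.1 * u ^ p.2 := by
  rw [Nat.sum_antidiagonal_succ, hc, zero_mul, zero_mul, zero_add, mul_sum]
  exact sum_congr rfl fun p _ => by ring

theorem mul_sum_antidiagonal_shift_snd (hc : ∀ i, c i 0 = 0) :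
    u * ∑ p ∈ antidiagonal n, c p.1 (p.2 + 1) * v ^ p.1 * u ^ p.2
      = ∑ p ∈ antidiagonal (n + 1), c p.1 p.2 * v ^ p.1 * u ^ p.2 := by
  rw [Nat.sum_antidiagonal_succ', hc, zero_mul, zero_mul, zero_add, mul_sum]
  exact sum_congr rfl fun p _ => by ring

end Shift

theorem jacobiP_contiguous (α β : ℝ) (n : ℕ) (x : ℝ) :
    (2 * ((n : ℝ) + 1) + α + β + 1) * jacobiP α β (n + 1) x
      = ((n : ℝ) + 1 + α + β + 1) * jacobiP (α + 1) β (n + 1) x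
        - ((n : ℝ) + 1 + β) * jacobiP (α + 1) β n x := by
  set v := (x + 1) / 2
  set u := (x - 1) / 2
  set a : ℝ := n + 1 + α
  set b : ℝ := n + β
  have hP : jacobiP (α + 1) β n x = ∑ p ∈ antidiagonal n,
      genBinom a p.1 * genBinom b p.2 * v ^ p.1 * u ^ p.2 := by
    rw [jacobiP_eq_sum_antidiagonal, show (n : ℝ) + (α + 1) = a by ring]
  have hv : (b + 1) * v * jacobiP (α + 1) β n x = ∑ p ∈ antidiagonal (n + 1),
      (genBinom (a + 1) p.1 - genBinom a p.1) * ((b + 1) * genBinom b p.2) * v ^ p.1 * u ^ p.2 := by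
    rw [← mul_sum_antidiagonal_shift_fst
      (fun i j => (genBinom (a + 1) i - genBinom a i) * ((b + 1) * genBinom b j)) v u n
      fun j => by simp [genBinom_zero_right], hP, mul_sum, mul_sum]
    refine sum_congr rfl fun p _ => ?_
    rw [genBinom_add_one_succ]
    ring
  have hu : (b + 1) * u * jacobiP (α + 1) β n x = ∑ p ∈ antidiagonal (n + 1),
      genBinom a p.1 * (p.2 * genBinom (b + 1) p.2) * v ^ p.1 * u ^ p.2 := by
    rw [← mul_sum_antidiagonal_shift_snd
      (fun i j => genBinom a i * (j * genBinom (b + 1) j)) v u n fun i => by simp,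
      hP, mul_sum, mul_sum]
    refine sum_congr rfl fun p _ => ?_
    push_cast
    rw [succ_mul_genBinom_add_one_succ]
    ring
  have hsplit : (b + 1) * jacobiP (α + 1) β n x
      = (b + 1) * v * jacobiP (α + 1) β n x - (b + 1) * u * jacobiP (α + 1) β n x := by
    rw [← sub_mul, ← mul_sub, show v - u = 1 by ring, mul_one]
  rw [show (n : ℝ) + 1 + β = b + 1 by ring, hsplit, hv, hu, jacobiP_eq_sum_antidiagonal,
    jacobiP_eq_sum_antidiagonal, show ((n + 1 : ℕ) : ℝ) + α = a by push_cast; ring,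
    show ((n + 1 : ℕ) : ℝ) + (α + 1) = a + 1 by push_cast; ring,
    show ((n + 1 : ℕ) : ℝ) + β = b + 1 by push_cast; ring, mul_sum, mul_sum,
    ← sum_sub_distrib, ← sum_sub_distrib]
  refine sum_congr rfl fun p hp => ?_
  have hij : (p.1 : ℝ) + p.2 = n + 1 := by exact_mod_cast mem_antidiagonal.mp hp
  linear_combination (-(v ^ p.1 * u ^ p.2 * genBinom (b + 1) p.2)) *
      add_one_sub_mul_genBinom_sub_genBinom a p.1
    - v ^ p.1 * u ^ p.2 * genBinom (b + 1) p.2 * genBinom (a + 1) p.1 * hij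
    + v ^ p.1 * u ^ p.2 * (genBinom (a + 1) p.1 - genBinom a p.1) * add_one_mul_genBinom b p.2

theorem jacobiP_zero (α β x : ℝ) : jacobiP α β 0 x = 1 := by
  simp [jacobiP, genBinom_zero_right]

theorem statement_0_general (α β : ℝ) (hα : -1/2 < α) (hβ : -1/2 < β) (l : ℕ)
    (x : ℝ) :
    ∑ k ∈ Finset.range (l + 1),
        (2 * (k : ℝ) + α + β + 1) *
          (Real.Gamma ((k : ℝ) + α + β + 1) / Real.Gamma ((k : ℝ) + β + 1)) *
          jacobiP α β k x
      = (Real.Gamma ((l : ℝ) + α + β + 2) / Real.Gamma ((l : ℝ) + β + 1)) *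
          jacobiP (α + 1) β l x := by
  induction l with
  | zero =>
    simp only [zero_add, sum_range_one, Nat.cast_zero, mul_zero, jacobiP_zero, mul_one]
    rw [show α + β + 2 = α + β + 1 + 1 by ring, Gamma_add_one (s := α + β + 1) (by linarith),
      mul_div_assoc]
  | succ l ih =>
    have hβl : 0 < (l : ℝ) + β + 1 := by linarith [(l.cast_nonneg : (0 : ℝ) ≤ l)]
    rw [sum_range_succ, ih]
    push_cast
    rw [show (l : ℝ) + 1 + α + β + 2 = (l : ℝ) + α + β + 2 + 1 by ring,
      show (l : ℝ) + 1 + α + β + 1 = (l : ℝ) + α + β + 2 by ring,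
      show (l : ℝ) + 1 + β + 1 = (l : ℝ) + β + 1 + 1 by ring,
      Gamma_add_one (s := (l : ℝ) + α + β + 2) (by linarith), Gamma_add_one hβl.ne']
    have hΓ := (Gamma_pos_of_pos hβl).ne'
    field_simp
    linear_combination Gamma ((l : ℝ) + α + β + 2) * jacobiP_contiguous α β l x

theorem statement_0 (α β : ℝ) (hα : -1/2 < α) (hβ : -1/2 < β) (l : ℕ)
    (x : ℝ) (hx1 : -1 ≤ x) (hx2 : x < 1) :
    ∑ k ∈ Finset.range (l + 1),
        (2 * (k : ℝ) + α + β + 1) *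
          (Real.Gamma ((k : ℝ) + α + β + 1) / Real.Gamma ((k : ℝ) + β + 1)) *
          jacobiP α β k x
      = (Real.Gamma ((l : ℝ) + α + β + 2) / Real.Gamma ((l : ℝ) + β + 1)) *
          jacobiP (α + 1) β l x :=
  statement_0_general α β hα hβ l x
end

section
/- For every nonnegative integers n and ℓ and every u with 0 < u < π, one has (D^n g_{ℓ,n})(u) = 2^n · n! · C_{2ℓ}^{(n+1)}(cos u), where g_{ℓ,n}(u) = sin((2ℓ+n+1)u)/sin(u) and D^n is the n-th iterate of the operator D defined by (Df)(u) = −(1/sin u) f′(u). -/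
open Real MeasureTheory

/-! Since `sin ((m + 1) u) / sin u = U_m (cos u) = C_m^{(1)} (cos u)` and
`D (F ∘ cos) = F' ∘ cos` wherever `sin u ≠ 0`, the claim is the `n`-fold iterate of the
derivative rule `d/dx C_{m+1}^{(λ)} = 2λ C_m^{(λ+1)}`, started at `λ = 1`; it produces the
factor `2^n (1)_n = 2^n n!`. -/

open Finset Polynomial Set Filter Topology

namespace Polynomial.Chebyshev

variable {R : Type*} [CommRing R]

theorem U_coeff_term_add_two (m k : ℕ) (x : R) :
    (-1) ^ (k + 1) * ((m + 2 - (k + 1)).choose (k + 1) : R) * (2 * x) ^ (m + 2 - 2 * (k + 1)) =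
      2 * x * ((-1) ^ (k + 1) * ((m + 1 - (k + 1)).choose (k + 1) : R) *
          (2 * x) ^ (m + 1 - 2 * (k + 1))) -
        (-1) ^ k * ((m - k).choose k : R) * (2 * x) ^ (m - 2 * k) := by
  rcases le_or_gt k m with hkm | hmk
  · rw [show m + 2 - (k + 1) = m - k + 1 by omega, show m + 1 - (k + 1) = m - k by omega,
      show m + 2 - 2 * (k + 1) = m - 2 * k by omega, Nat.choose_succ_succ', Nat.cast_add]
    rcases le_or_gt (2 * k + 1) m with hk | hk
    · rw [show m - 2 * k = m + 1 - 2 * (k + 1) + 1 by omega, pow_succ]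
      ring
    · rw [Nat.choose_eq_zero_of_lt (show m - k < k + 1 by omega)]
      ring
  · rw [Nat.choose_eq_zero_of_lt (show m + 2 - (k + 1) < k + 1 by omega),
      Nat.choose_eq_zero_of_lt (show m + 1 - (k + 1) < k + 1 by omega),
      Nat.choose_eq_zero_of_lt (show m - k < k by omega)]
    ring

theorem U_eval_eq_sum (m : ℕ) {N : ℕ} (hN : m / 2 < N) (x : R) :
    (U R m).eval x =
      ∑ k ∈ range N, (-1) ^ k * ((m - k).choose k : R) * (2 * x) ^ (m - 2 * k) := by
  induction m using Nat.twoStepInduction generalizing N with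
  | zero =>
    rw [sum_eq_single_of_mem 0 (mem_range.2 hN) (fun k _ hk => by
      simp [Nat.choose_eq_zero_of_lt (Nat.pos_of_ne_zero hk)])]
    simp
  | one =>
    rw [sum_eq_single_of_mem 0 (mem_range.2 hN) (fun k _ hk => by
      simp [Nat.choose_eq_zero_of_lt (show 1 - k < k by omega)])]
    simp
  | more m ih₀ ih₁ =>
    obtain ⟨N, rfl⟩ : ∃ N', N = N' + 1 := Nat.exists_eq_add_one.2 (by omega)
    have hU : (U R (m + 2 : ℕ)).eval x = 2 * x * (U R (m + 1 : ℕ)).eval x - (U R m).eval x := by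
      simp
    rw [hU, ih₁ (N := N + 1) (by omega), ih₀ (N := N) (by omega), sum_range_succ',
      sum_range_succ' _ N, mul_add, mul_sum]
    simp only [U_coeff_term_add_two, sum_sub_distrib]
    simp only [pow_zero, Nat.choose_zero_right, Nat.cast_one, one_mul, Nat.sub_zero, mul_zero]
    ring

end Polynomial.Chebyshev

theorem gegenbauerC_one_eq_U_eval (m : ℕ) (x : ℝ) :
    gegenbauerC m 1 x = (Polynomial.Chebyshev.U ℝ m).eval x := by
  rw [Polynomial.Chebyshev.U_eval_eq_sum m (Nat.lt_succ_self _)]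
  refine sum_congr rfl fun k hk => ?_
  have h2k : 2 * k ≤ m := by have := mem_range.1 hk; omega
  have hfac : ((m - k).factorial : ℝ) =
      (m - k).choose k * k.factorial * (m - 2 * k).factorial := by
    rw [show m - 2 * k = m - k - k by omega]
    exact_mod_cast (Nat.choose_mul_factorial_mul_factorial (by omega)).symm
  rw [show (1 : ℝ) + m - k = (m - k : ℕ) + 1 by push_cast [show k ≤ m by omega]; ring,
    Real.Gamma_nat_eq_factorial, Real.Gamma_one, hfac]
  field_simp

theorem gegenbauerC_one_cos_mul_sin (m : ℕ) (v : ℝ) :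
    gegenbauerC m 1 (cos v) * sin v = sin ((m + 1) * v) := by
  rw [gegenbauerC_one_eq_U_eval]
  exact_mod_cast Polynomial.Chebyshev.U_real_cos v m

theorem contDiff_gegenbauerC (m : ℕ) (lam : ℝ) (k : WithTop ℕ∞) :
    ContDiff ℝ k (gegenbauerC m lam) := by
  unfold gegenbauerC
  fun_prop

theorem hasDerivAt_gegenbauerC (m : ℕ) {lam : ℝ} (hlam : lam ≠ 0) (x : ℝ) :
    HasDerivAt (gegenbauerC (m + 1) lam) (2 * lam * gegenbauerC m (lam + 1) x) x := by
  set c : ℕ → ℝ := fun k => (-1) ^ k *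
    (Gamma (lam + (m + 1 : ℕ) - k) / (Gamma lam * k.factorial * (m + 1 - 2 * k).factorial))
  have hterm (k : ℕ) : HasDerivAt (fun y => c k * (2 * y) ^ (m + 1 - 2 * k))
      (c k * ((m + 1 - 2 * k : ℕ) * (2 * x) ^ (m - 2 * k) * 2)) x := by
    have := ((hasDerivAt_id x).const_mul (2 : ℝ)).fun_pow (m + 1 - 2 * k)
    rw [show m + 1 - 2 * k - 1 = m - 2 * k by omega] at this
    simpa using this.const_mul (c k)
  have hsum : ∑ k ∈ range ((m + 1) / 2 + 1),
      c k * ((m + 1 - 2 * k : ℕ) * (2 * x) ^ (m - 2 * k) * 2) =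
        2 * lam * gegenbauerC m (lam + 1) x := by
    rw [gegenbauerC, mul_sum,
      ← sum_subset (range_subset_range.2 (by omega : m / 2 + 1 ≤ (m + 1) / 2 + 1))]
    · refine sum_congr rfl fun k hk => ?_
      have h2k : 2 * k ≤ m := by have := mem_range.1 hk; omega
      simp only [c]
      rw [show m + 1 - 2 * k = m - 2 * k + 1 by omega, Nat.factorial_succ,
        show lam + (m + 1 : ℕ) - k = lam + 1 + m - k by push_cast; ring, Gamma_add_one hlam]
      push_cast
      field_simp
    · intro k _ hk
      rw [show m + 1 - 2 * k = 0 by simp at hk; omega]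
      simp
  exact (HasDerivAt.fun_sum fun k _ => hterm k).congr_deriv hsum

theorem deriv_gegenbauerC (m : ℕ) {lam : ℝ} (hlam : lam ≠ 0) :
    deriv (gegenbauerC (m + 1) lam) = fun x => 2 * lam * gegenbauerC m (lam + 1) x :=
  funext fun x => (hasDerivAt_gegenbauerC m hlam x).deriv

theorem poch_succ' (q : ℝ) (n : ℕ) : poch q (n + 1) = q * poch (q + 1) n := by
  simp only [poch, prod_range_succ', Nat.cast_add, Nat.cast_one, Nat.cast_zero, add_zero]
  ring_nf

theorem poch_one (n : ℕ) : poch 1 n = n.factorial := by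
  simp [poch, ← prod_range_add_one_eq_factorial, add_comm]

theorem iteratedDeriv_gegenbauerC (n m : ℕ) {lam : ℝ} (hlam : 0 < lam) :
    iteratedDeriv n (gegenbauerC (m + n) lam) =
      fun x => 2 ^ n * poch lam n * gegenbauerC m (lam + n) x := by
  induction n generalizing lam with
  | zero => simp [poch]
  | succ n ih =>
    ext x
    rw [iteratedDeriv_succ', ← add_assoc, deriv_gegenbauerC _ hlam.ne',
      iteratedDeriv_const_mul_field, ih (by linarith), poch_succ']
    push_cast
    ring_nf

theorem Dop_iterate_congr (n : ℕ) {f g : ℝ → ℝ} {u : ℝ} (h : f =ᶠ[𝓝 u] g) :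
    Dop^[n] f =ᶠ[𝓝 u] Dop^[n] g := by
  induction n generalizing f g with
  | zero => exact h
  | succ n ih =>
    refine ih ?_
    filter_upwards [h.deriv] with v hv
    simp only [Dop, hv]

theorem Dop_comp_cos {F : ℝ → ℝ} {v : ℝ} (hF : DifferentiableAt ℝ F (cos v))
    (hv : sin v ≠ 0) :
    Dop (fun w => F (cos w)) v = deriv F (cos v) := by
  rw [Dop, show (fun w => F (cos w)) = F ∘ cos from rfl,
    (hF.hasDerivAt.comp v (hasDerivAt_cos v)).deriv]
  field_simp

theorem Dop_iterate_comp_cos {n : ℕ} {F : ℝ → ℝ} (hF : ContDiff ℝ n F) {u : ℝ}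
    (hu : u ∈ Ioo 0 π) : Dop^[n] (fun v => F (cos v)) u = iteratedDeriv n F (cos u) := by
  induction n generalizing F with
  | zero => rfl
  | succ n ih =>
    rw [Nat.cast_succ, contDiff_succ_iff_deriv] at hF
    have hDop : Dop (fun v => F (cos v)) =ᶠ[𝓝 u] fun v => deriv F (cos v) := by
      filter_upwards [isOpen_Ioo.mem_nhds hu] with v hv
      exact Dop_comp_cos (hF.1 _) (sin_pos_of_pos_of_lt_pi hv.1 hv.2).ne'
    rw [Function.iterate_succ_apply, (Dop_iterate_congr n hDop).eq_of_nhds, ih hF.2.2,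
      iteratedDeriv_succ']

theorem statement_4 (n l : ℕ) (u : ℝ) (hu1 : 0 < u) (hu2 : u < π) :
    (Dop^[n] (fun v => Real.sin ((2 * (l : ℝ) + n + 1) * v) / Real.sin v)) u
      = 2 ^ n * (Nat.factorial n : ℝ) * gegenbauerC (2 * l) ((n : ℝ) + 1) (Real.cos u) := by
  have hu : u ∈ Ioo 0 π := ⟨hu1, hu2⟩
  have hquot : (fun v => sin ((2 * (l : ℝ) + n + 1) * v) / sin v) =ᶠ[𝓝 u]
      fun v => gegenbauerC (2 * l + n) 1 (cos v) := by
    filter_upwards [isOpen_Ioo.mem_nhds hu] with v hv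
    rw [div_eq_iff (sin_pos_of_pos_of_lt_pi hv.1 hv.2).ne', gegenbauerC_one_cos_mul_sin]
    push_cast
    ring_nf
  rw [(Dop_iterate_congr n hquot).eq_of_nhds, Dop_iterate_comp_cos (contDiff_gegenbauerC _ _ _) hu,
    iteratedDeriv_gegenbauerC n (2 * l) one_pos, poch_one, add_comm]
end

section
/- For every nonnegative integers n and ℓ and every real t with 0 < t ≤ 1, one has P_ℓ^{(n,0)}(2t² − 1) = (2·ℓ!·n!)/(π·(ℓ+n)!) · ∫_0^1 C_{2ℓ}^{(n+1)}(tv)/√(1 − v²) dv. -/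
open Real MeasureTheory

/-!
Both sides are polynomials in `t²` of degree `ℓ`, and they agree coefficient by coefficient.
Substituting `v = sin θ` turns the integral into `∫₀^{π/2} C_{2ℓ}^{(n+1)}(t sin θ) dθ`, which the
Wallis integrals `∫₀^{π/2} sin^{2j} θ dθ = (π/2) · C(2j, j) / 4^j` evaluate monomial by monomial.
On the Jacobi side, expanding `(t² - 1)^k` binomially and summing the resulting inner sum by
Vandermonde's identity gives the coefficient `(-1)^k C(ℓ, k) C(2ℓ + n - k, ℓ - k)` of `t^{2(ℓ-k)}`.
-/

open Finset
open scoped Nat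

lemma genBinom_natCast (N j : ℕ) : genBinom N j = N.choose j := by
  rw [genBinom, Nat.cast_choose_eq_descPochhammer_div, descPochhammer_eval_eq_prod_range]

lemma jacobiP_natCast_zero (n l : ℕ) (x : ℝ) :
    jacobiP n 0 l x = ∑ k ∈ range (l + 1),
      ((l + n).choose (l - k) : ℝ) * l.choose k * ((x - 1) / 2) ^ k * ((x + 1) / 2) ^ (l - k) := by
  simp only [jacobiP, add_zero, ← Nat.cast_add, genBinom_natCast]

lemma sum_choose_mul_choose_mul_choose (n l i : ℕ) (hi : i ≤ l) :
    ∑ k ∈ Ico i (l + 1), (l + n).choose (l - k) * (l.choose k * k.choose i)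
      = l.choose i * (2 * l + n - i).choose (l - i) := by
  have vandermonde : (2 * l + n - i).choose (l - i)
      = ∑ r ∈ range (l - i + 1), (l - i).choose r * (l + n).choose (l - i - r) := by
    rw [show 2 * l + n - i = (l - i) + (l + n) by omega, Nat.add_choose_eq,
      Nat.sum_antidiagonal_eq_sum_range_succ (fun a b => (l - i).choose a * (l + n).choose b)]
  rw [vandermonde, mul_sum, sum_Ico_eq_sum_range, show l + 1 - i = l - i + 1 by omega]
  refine sum_congr rfl fun r _ => ?_
  rw [Nat.choose_mul (by omega), Nat.add_sub_cancel_left, show l - (i + r) = l - i - r by omega]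
  ring

lemma sum_choose_mul_sub_one_pow (n l : ℕ) (s : ℝ) :
    ∑ k ∈ range (l + 1), ((l + n).choose (l - k) : ℝ) * l.choose k * (s - 1) ^ k * s ^ (l - k)
      = ∑ i ∈ range (l + 1),
          (-1) ^ i * (l.choose i : ℝ) * (2 * l + n - i).choose (l - i) * s ^ (l - i) := by
  have binomial_expand : ∀ k ∈ range (l + 1),
      ((l + n).choose (l - k) : ℝ) * l.choose k * (s - 1) ^ k * s ^ (l - k)
        = ∑ i ∈ Ico 0 (k + 1),
            (-1) ^ i * (((l + n).choose (l - k) * (l.choose k * k.choose i) : ℕ) : ℝ)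
              * s ^ (l - i) := by
    intro k hk
    rw [sub_eq_neg_add, add_pow, ← range_eq_Ico, mul_sum, sum_mul]
    refine sum_congr rfl fun i hi => ?_
    have hi : i ≤ k := Nat.lt_succ_iff.mp (mem_range.mp hi)
    have hk : k ≤ l := Nat.lt_succ_iff.mp (mem_range.mp hk)
    rw [show l - i = (k - i) + (l - k) by omega, pow_add]
    push_cast
    ring
  rw [sum_congr rfl binomial_expand, range_eq_Ico, ← sum_Ico_Ico_comm]
  refine sum_congr rfl fun i hi => ?_
  rw [← sum_mul, ← mul_sum, ← Nat.cast_sum,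
    sum_choose_mul_choose_mul_choose n l i (Nat.lt_succ_iff.mp (mem_Ico.mp hi).2)]
  push_cast
  ring

lemma integral_sin_pow_two_mul_zero_pi_div_two (j : ℕ) :
    ∫ x in (0 : ℝ)..(π / 2), sin x ^ (2 * j) = π / 2 * (2 * j).choose j / 4 ^ j := by
  induction j with
  | zero => simp
  | succ j ih =>
    have hcentral :
        ((2 * j + 2).choose (j + 1) : ℝ) * (j + 1) = 2 * (2 * j + 1) * (2 * j).choose j := by
      have h := Nat.succ_mul_centralBinom_succ j
      simp only [Nat.centralBinom, mul_add, mul_one] at h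
      exact_mod_cast (mul_comm _ _).trans h
    rw [mul_add, mul_one, integral_sin_pow, ih, sin_zero, sin_pi_div_two, cos_pi_div_two]
    push_cast
    field_simp
    linear_combination (-(2 * π * 4 ^ j)) * hcentral

lemma sin_image_Ioo_zero_pi_div_two : sin '' Set.Ioo 0 (π / 2) = Set.Ioo 0 1 := by
  ext v
  constructor
  · rintro ⟨θ, ⟨hθ₀, hθ⟩, rfl⟩
    refine ⟨sin_pos_of_pos_of_lt_pi hθ₀ (by linarith [pi_pos]), ?_⟩
    simpa using strictMonoOn_sin ⟨by linarith, hθ.le⟩ ⟨by linarith [pi_pos], le_rfl⟩ hθ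
  · rintro ⟨hv₀, hv₁⟩
    exact ⟨arcsin v, ⟨arcsin_pos.mpr hv₀, arcsin_lt_pi_div_two.mpr hv₁⟩,
      sin_arcsin (by linarith) hv₁.le⟩

lemma integral_div_sqrt_one_sub_sq_eq_integral_sin (f : ℝ → ℝ) :
    ∫ v in (0 : ℝ)..1, f v / √(1 - v ^ 2) = ∫ θ in (0 : ℝ)..(π / 2), f (sin θ) := by
  have injOn : Set.InjOn sin (Set.Ioo 0 (π / 2)) :=
    injOn_sin.mono <|
      Set.Ioo_subset_Icc_self.trans (Set.Icc_subset_Icc (by linarith [pi_pos]) le_rfl)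
  rw [intervalIntegral.integral_of_le zero_le_one,
    intervalIntegral.integral_of_le (by positivity), integral_Ioc_eq_integral_Ioo,
    integral_Ioc_eq_integral_Ioo, ← sin_image_Ioo_zero_pi_div_two,
    integral_image_eq_integral_abs_deriv_smul measurableSet_Ioo
      (fun θ _ => (hasDerivAt_sin θ).hasDerivWithinAt) injOn]
  refine setIntegral_congr_fun measurableSet_Ioo fun θ (hθ : θ ∈ Set.Ioo 0 (π / 2)) => ?_
  obtain ⟨hθ₀, hθ⟩ := hθ
  have hcos : 0 < cos θ := cos_pos_of_mem_Ioo ⟨by linarith [pi_pos], hθ⟩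
  rw [← cos_sq', sqrt_sq hcos.le, abs_of_pos hcos, smul_eq_mul]
  field_simp

lemma gegenbauerC_two_mul_natCast_add_one (n l : ℕ) (x : ℝ) :
    gegenbauerC (2 * l) (n + 1) x = ∑ k ∈ range (l + 1),
      (-1) ^ k * ((2 * l + n - k)! / (n ! * k ! * (2 * (l - k))!)) * (2 * x) ^ (2 * (l - k)) := by
  rw [gegenbauerC, show 2 * l / 2 + 1 = l + 1 by omega]
  refine sum_congr rfl fun k hk => ?_
  have hk : k ≤ l := Nat.lt_succ_iff.mp (mem_range.mp hk)
  have hΓ : (n + 1 + ((2 * l : ℕ) : ℝ) - k) = ((2 * l + n - k : ℕ) : ℝ) + 1 := by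
    rw [Nat.cast_sub (by omega)]
    push_cast
    ring
  rw [hΓ, Gamma_nat_eq_factorial, Gamma_nat_eq_factorial, show 2 * l - 2 * k = 2 * (l - k) by omega]

lemma integral_gegenbauerC_two_mul_comp_sin (n l : ℕ) (t : ℝ) :
    ∫ θ in (0 : ℝ)..(π / 2), gegenbauerC (2 * l) (n + 1) (t * sin θ)
      = π / 2 * ∑ k ∈ range (l + 1),
          (-1) ^ k * ((2 * l + n - k)! / (n ! * k ! * (l - k)! ^ 2)) * (t ^ 2) ^ (l - k) := by
  simp only [gegenbauerC_two_mul_natCast_add_one, mul_pow]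
  rw [intervalIntegral.integral_finsetSum fun k _ =>
      (by fun_prop : Continuous _).intervalIntegrable _ _, mul_sum]
  refine sum_congr rfl fun k _ => ?_
  simp only [intervalIntegral.integral_const_mul, integral_sin_pow_two_mul_zero_pi_div_two]
  rw [Nat.cast_choose ℝ (by omega : l - k ≤ 2 * (l - k)),
    show 2 * (l - k) - (l - k) = l - k by omega, pow_mul, pow_mul]
  field_simp
  ring

theorem statement_5_general (n l : ℕ) (t : ℝ) :
    jacobiP (n : ℝ) 0 l (2 * t ^ 2 - 1)
      = (2 * (Nat.factorial l : ℝ) * (Nat.factorial n : ℝ)) /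
          (π * (Nat.factorial (l + n) : ℝ)) *
          ∫ v in (0 : ℝ)..1,
            gegenbauerC (2 * l) ((n : ℝ) + 1) (t * v) / Real.sqrt (1 - v ^ 2) := by
  have hx₁ : (2 * t ^ 2 - 1 - 1) / 2 = t ^ 2 - 1 := by ring
  have hx₂ : (2 * t ^ 2 - 1 + 1) / 2 = t ^ 2 := by ring
  rw [jacobiP_natCast_zero, hx₁, hx₂, sum_choose_mul_sub_one_pow,
    integral_div_sqrt_one_sub_sq_eq_integral_sin (fun v => gegenbauerC (2 * l) (n + 1) (t * v)),
    integral_gegenbauerC_two_mul_comp_sin, ← mul_assoc, mul_sum]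
  refine sum_congr rfl fun k hk => ?_
  have hk : k ≤ l := Nat.lt_succ_iff.mp (mem_range.mp hk)
  rw [Nat.cast_choose ℝ hk, Nat.cast_choose ℝ (by omega : l - k ≤ 2 * l + n - k),
    show 2 * l + n - k - (l - k) = l + n by omega]
  field_simp

theorem statement_5 (n l : ℕ) (t : ℝ) (ht1 : 0 < t) (ht2 : t ≤ 1) :
    jacobiP (n : ℝ) 0 l (2 * t ^ 2 - 1)
      = (2 * (Nat.factorial l : ℝ) * (Nat.factorial n : ℝ)) /
          (π * (Nat.factorial (l + n) : ℝ)) *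
          ∫ v in (0 : ℝ)..1,
            gegenbauerC (2 * l) ((n : ℝ) + 1) (t * v) / Real.sqrt (1 - v ^ 2) :=
  statement_5_general n l t
end

section
/- For every nonnegative integers m, n, ℓ with n ≥ m and every real t with 0 ≤ t ≤ 1, one has P_ℓ^{(n,m)}(2t² − 1) = d_{n,m}(ℓ) · ∫_0^1 (1 − v²)^{m − 1/2} · C_{2ℓ}^{(n+m+1)}(vt) dv, where d_{n,m}(ℓ) = 2^{2m+1}·(ℓ+m)!·m!·(n+m)! / (π·(2m)!·(ℓ+n+m)!). -/
open Real MeasureTheory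

/-!
Both sides are polynomials in `t²`, and they agree coefficientwise. Writing `y = (x + 1) / 2`,
the Jacobi polynomial with integer parameters is
`∑ₛ (-1)ˢ C(ℓ+m, s) C(2ℓ+n+m-s, ℓ-s) y^(ℓ-s)`: expand `(y - 1)^k` and collapse the inner sum by
Vandermonde's identity. On the other side, expand the
Gegenbauer polynomial and integrate termwise; the substitution `u = v²` turns each moment
`∫₀¹ (1 - v²)^(m-1/2) v^(2q) dv` into half a Beta integral, which is a ratio of factorials and `π`
since `Γ(q + 1/2) = (2q)! √π / (4^q q!)`.
-/

open Finset
open scoped Nat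

lemma genBinom_natCast_s6 (a j : ℕ) : genBinom a j = a.choose j := by
  rw [genBinom, Nat.cast_choose_eq_descPochhammer_div, descPochhammer_eval_eq_prod_range]

lemma sum_choose_mul_choose_mul_choose_s6 (A B l s : ℕ) (hs : s ≤ l) :
    ∑ k ∈ range (l + 1), A.choose (l - k) * (B.choose k * k.choose s)
      = B.choose s * (A + (B - s)).choose (l - s) := by
  obtain ⟨r, rfl⟩ := Nat.exists_eq_add_of_le hs
  have hzero : ∑ k ∈ range s, A.choose (s + r - k) * (B.choose k * k.choose s) = 0 :=
    sum_eq_zero fun k hk => by rw [Nat.choose_eq_zero_of_lt (mem_range.1 hk), mul_zero, mul_zero]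
  rw [show s + r + 1 = s + (r + 1) by ring, sum_range_add, hzero, zero_add,
    Nat.add_sub_cancel_left, add_comm A, Nat.add_choose_eq,
    Finset.Nat.sum_antidiagonal_eq_sum_range_succ_mk, mul_sum]
  refine sum_congr rfl fun j _ => ?_
  rw [Nat.choose_mul (Nat.le_add_right s j), Nat.add_sub_cancel_left,
    show s + r - (s + j) = r - j by omega]
  ring

lemma sub_one_pow_mul_pow_sub {R : Type*} [CommRing R] (x : R) {k l : ℕ} (hk : k ≤ l) :
    (x - 1) ^ k * x ^ (l - k) = ∑ s ∈ range (l + 1), (-1) ^ s * k.choose s * x ^ (l - s) := by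
  rw [sub_eq_neg_add, add_pow, sum_mul,
    ← sum_subset (range_subset_range.2 (Nat.succ_le_succ hk)) fun s _ hs => by
      rw [Nat.choose_eq_zero_of_lt (by simpa using hs)]; simp]
  refine sum_congr rfl fun s hs => ?_
  have hsk : s ≤ k := Nat.lt_succ_iff.1 (mem_range.1 hs)
  rw [show l - s = k - s + (l - k) by omega, pow_add]
  ring

lemma jacobiP_natCast (a b l : ℕ) (x : ℝ) :
    jacobiP a b l x = ∑ s ∈ range (l + 1),
      (-1) ^ s * ((l + b).choose s * (l + a + (l + b - s)).choose (l - s) : ℕ) *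
        ((x + 1) / 2) ^ (l - s) := by
  set y := (x + 1) / 2
  have hterm : ∀ k ∈ range (l + 1),
      genBinom (l + a) (l - k) * genBinom (l + b) k * ((x - 1) / 2) ^ k * y ^ (l - k)
        = ∑ s ∈ range (l + 1),
          (-1) ^ s * ((l + a).choose (l - k) * ((l + b).choose k * k.choose s) : ℕ) *
            y ^ (l - s) := by
    intro k hk
    rw [← Nat.cast_add, ← Nat.cast_add, genBinom_natCast_s6, genBinom_natCast_s6,
      show (x - 1) / 2 = y - 1 by ring, mul_assoc,
      sub_one_pow_mul_pow_sub y (Nat.lt_succ_iff.1 (mem_range.1 hk)), mul_sum]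
    refine sum_congr rfl fun s _ => ?_
    push_cast
    ring
  rw [jacobiP, sum_congr rfl hterm, sum_comm]
  refine sum_congr rfl fun s hs => ?_
  rw [← sum_mul, ← mul_sum, ← Nat.cast_sum,
    sum_choose_mul_choose_mul_choose_s6 _ _ _ _ (Nat.lt_succ_iff.1 (mem_range.1 hs))]

lemma integral_rpow_mul_one_sub_rpow {a b : ℝ} (ha : 0 < a) (hb : 0 < b) :
    ∫ x in (0 : ℝ)..1, x ^ (a - 1) * (1 - x) ^ (b - 1) = Gamma a * Gamma b / Gamma (a + b) := by
  have h := Complex.betaIntegral_eq_Gamma_mul_div a b (by simpa) (by simpa)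
  rw [← Complex.ofReal_add, Complex.Gamma_ofReal, Complex.Gamma_ofReal, Complex.Gamma_ofReal,
    Complex.betaIntegral] at h
  rw [← Complex.ofReal_inj, ← intervalIntegral.integral_ofReal]
  push_cast
  rw [← h]
  refine intervalIntegral.integral_congr fun x hx => ?_
  rw [Set.uIcc_of_le zero_le_one] at hx
  simp only [Complex.ofReal_cpow hx.1, Complex.ofReal_cpow (sub_nonneg.2 hx.2)]
  push_cast
  rfl

lemma intervalIntegrable_one_sub_sq_rpow {e : ℝ} (he : -1 < e) :
    IntervalIntegrable (fun v : ℝ => (1 - v ^ 2) ^ e) volume 0 1 := by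
  have hsub : IntervalIntegrable (fun v : ℝ => (1 - v) ^ e) volume 0 1 := by
    simpa using
      (intervalIntegral.intervalIntegrable_rpow' (a := 0) (b := 1) he).comp_sub_left 1 |>.symm
  have hadd : ContinuousOn (fun v : ℝ => (1 + v) ^ e) (Set.uIcc 0 1) := by
    refine ContinuousOn.rpow_const (by fun_prop) fun v hv => Or.inl ?_
    rw [Set.uIcc_of_le zero_le_one] at hv
    linarith [hv.1]
  refine (hsub.mul_continuousOn hadd).congr fun v hv => ?_
  rw [Set.uIoc_of_le zero_le_one] at hv
  rw [show 1 - v ^ 2 = (1 - v) * (1 + v) by ring,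
    mul_rpow (by linarith [hv.2]) (by linarith [hv.1])]

lemma integral_one_sub_sq_rpow_mul_pow_two_mul {e : ℝ} (he : -1 < e) (q : ℕ) :
    ∫ v in (0 : ℝ)..1, (1 - v ^ 2) ^ e * v ^ (2 * q)
      = Gamma (q + 1 / 2) * Gamma (e + 1) / (2 * Gamma (q + 1 / 2 + (e + 1))) := by
  have hsq : (fun v : ℝ => v ^ 2) '' Set.Ioo 0 1 = Set.Ioo 0 1 := by
    ext u
    constructor
    · rintro ⟨v, ⟨hv0, hv1⟩, rfl⟩
      exact ⟨by positivity, by nlinarith⟩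
    · rintro ⟨hu0, hu1⟩
      exact ⟨√u, ⟨sqrt_pos.2 hu0, (sqrt_lt' one_pos).2 (by simpa)⟩, sq_sqrt hu0.le⟩
  have hsubst := integral_image_eq_integral_abs_deriv_smul
    (measurableSet_Ioo (a := (0 : ℝ)) (b := 1))
    (fun v _ => (hasDerivAt_pow 2 v).hasDerivWithinAt)
    ((pow_left_strictMonoOn₀ two_ne_zero).injOn.mono fun _ hv => le_of_lt hv.1)
    (fun u : ℝ => u ^ ((q : ℝ) + 1 / 2 - 1) * (1 - u) ^ (e + 1 - 1))
  rw [hsq, ← integral_Ioc_eq_integral_Ioo, ← intervalIntegral.integral_of_le zero_le_one,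
    integral_rpow_mul_one_sub_rpow (by positivity) (by linarith)] at hsubst
  rw [intervalIntegral.integral_of_le zero_le_one, integral_Ioc_eq_integral_Ioo,
    div_mul_eq_div_div_swap, hsubst, ← integral_div]
  refine setIntegral_congr_fun measurableSet_Ioo fun v ⟨hv0, _⟩ => ?_
  have hpow : v * (v ^ 2) ^ ((q : ℝ) + 1 / 2 - 1) = v ^ (2 * q) := by
    rw [← rpow_natCast v 2, ← rpow_mul hv0.le, ← rpow_natCast,
      show ((2 * q : ℕ) : ℝ) = 1 + 2 * (q + 1 / 2 - 1) by push_cast; ring,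
      rpow_add hv0, rpow_one, Nat.cast_ofNat]
  rw [smul_eq_mul, Nat.cast_ofNat, pow_one, abs_of_pos (by positivity), add_sub_cancel_right,
    ← hpow]
  ring

lemma Gamma_natCast_add_half (q : ℕ) :
    Gamma (q + 1 / 2) = (2 * q)! * √π / (4 ^ q * q !) := by
  induction q with
  | zero => simpa using Gamma_one_half_eq
  | succ q ih =>
    rw [Nat.cast_succ, add_right_comm, Gamma_add_one (by positivity), ih,
      show 2 * (q + 1) = 2 * q + 1 + 1 by ring,
      Nat.factorial_succ, Nat.factorial_succ,
      Nat.factorial_succ]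
    push_cast
    field_simp
    ring

lemma integral_one_sub_sq_rpow_sub_half_mul_pow (m q : ℕ) :
    ∫ v in (0 : ℝ)..1, (1 - v ^ 2) ^ ((m : ℝ) - 1 / 2) * v ^ (2 * q)
      = π * (2 * q)! * (2 * m)! / (2 * 4 ^ (q + m) * q ! * m ! * (q + m)!) := by
  rw [integral_one_sub_sq_rpow_mul_pow_two_mul (by linarith [m.cast_nonneg (α := ℝ)]),
    show (q : ℝ) + 1 / 2 + (m - 1 / 2 + 1) = (q + m : ℕ) + 1 by push_cast; ring,
    show (m : ℝ) - 1 / 2 + 1 = m + 1 / 2 by ring, Gamma_nat_eq_factorial,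
    Gamma_natCast_add_half, Gamma_natCast_add_half, pow_add]
  field_simp
  exact sq_sqrt pi_pos.le

lemma gegenbauerC_two_mul (l : ℕ) (lam x : ℝ) :
    gegenbauerC (2 * l) lam x = ∑ k ∈ range (l + 1),
      (-1) ^ k * (Gamma (lam + (2 * l : ℕ) - k) / (Gamma lam * k ! * (2 * (l - k))!)) *
        (2 * x) ^ (2 * (l - k)) := by
  simp only [gegenbauerC, Nat.mul_div_cancel_left l two_pos, Nat.mul_sub]

lemma integral_mul_gegenbauerC_two_mul {w : ℝ → ℝ} {a b : ℝ}
    (hw : IntervalIntegrable w volume a b) (l : ℕ) (lam t : ℝ) :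
    ∫ v in a..b, w v * gegenbauerC (2 * l) lam (v * t) = ∑ k ∈ range (l + 1),
      (-1) ^ k * (Gamma (lam + (2 * l : ℕ) - k) / (Gamma lam * k ! * (2 * (l - k))!)) *
        (2 * t) ^ (2 * (l - k)) * ∫ v in a..b, w v * v ^ (2 * (l - k)) := by
  have hterm : ∀ v, w v * gegenbauerC (2 * l) lam (v * t) = ∑ k ∈ range (l + 1),
      (-1) ^ k * (Gamma (lam + (2 * l : ℕ) - k) / (Gamma lam * k ! * (2 * (l - k))!)) *
        (2 * t) ^ (2 * (l - k)) * (w v * v ^ (2 * (l - k))) := fun v => by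
    rw [gegenbauerC_two_mul, mul_sum]
    exact sum_congr rfl fun k _ => by ring
  simp_rw [hterm, ← intervalIntegral.integral_const_mul]
  exact intervalIntegral.integral_finsetSum fun k _ =>
    (hw.mul_continuousOn (continuousOn_pow _)).const_mul _

theorem statement_6_general (m n l : ℕ) (t : ℝ) :
    jacobiP (n : ℝ) (m : ℝ) l (2 * t ^ 2 - 1)
      = (2 ^ (2 * m + 1) * (Nat.factorial (l + m) : ℝ) * (Nat.factorial m : ℝ) *
            (Nat.factorial (n + m) : ℝ)) /
          (π * (Nat.factorial (2 * m) : ℝ) * (Nat.factorial (l + n + m) : ℝ)) *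
          ∫ v in (0 : ℝ)..1,
            (1 - v ^ 2) ^ ((m : ℝ) - 1 / 2) * gegenbauerC (2 * l) ((n : ℝ) + m + 1) (v * t) := by
  rw [jacobiP_natCast, integral_mul_gegenbauerC_two_mul
    (intervalIntegrable_one_sub_sq_rpow (by linarith [m.cast_nonneg (α := ℝ)])), mul_sum]
  refine sum_congr rfl fun k hk => ?_
  obtain ⟨q, rfl⟩ := Nat.exists_eq_add_of_le (Nat.lt_succ_iff.1 (mem_range.1 hk))
  rw [Nat.add_sub_cancel_left, integral_one_sub_sq_rpow_sub_half_mul_pow,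
    show k + q + n + (k + q + m - k) = q + m + (k + q + n) by omega,
    show (n : ℝ) + m + 1 + (2 * (k + q) : ℕ) - k = (q + m + (k + q + n) : ℕ) + 1 by
      push_cast; ring,
    show (n : ℝ) + m + 1 = (n + m : ℕ) + 1 by push_cast; ring,
    Gamma_nat_eq_factorial, Gamma_nat_eq_factorial, Nat.cast_mul,
    Nat.cast_choose ℝ (show k ≤ k + q + m by omega),
    Nat.cast_choose ℝ (show q ≤ q + m + (k + q + n) by omega),
    show (2 * t ^ 2 - 1 + 1) / 2 = t ^ 2 by ring,
    show (4 : ℝ) ^ (q + m) = 2 ^ (2 * (q + m)) by rw [pow_mul]; norm_num,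
    show k + q + m - k = q + m by omega, show q + m + (k + q + n) - q = k + q + n + m by omega]
  field_simp
  ring

theorem statement_6 (m n l : ℕ) (hnm : m ≤ n) (t : ℝ) (ht1 : 0 ≤ t) (ht2 : t ≤ 1) :
    jacobiP (n : ℝ) (m : ℝ) l (2 * t ^ 2 - 1)
      = (2 ^ (2 * m + 1) * (Nat.factorial (l + m) : ℝ) * (Nat.factorial m : ℝ) *
            (Nat.factorial (n + m) : ℝ)) /
          (π * (Nat.factorial (2 * m) : ℝ) * (Nat.factorial (l + n + m) : ℝ)) *
          ∫ v in (0 : ℝ)..1,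
            (1 - v ^ 2) ^ ((m : ℝ) - 1 / 2) * gegenbauerC (2 * l) ((n : ℝ) + m + 1) (v * t) :=
  statement_6_general m n l t
end

section
/- For every positive integer m and every real v with −1 < v < 1, the m-th derivative of v ↦ (1 − v²)^{m − 1/2} satisfies d^m/dv^m[(1 − v²)^{m−1/2}] = (−1)^m · 2^m · m! · (1 − v²)^{−1/2} · P_m^{(−1/2,−1/2)}(v). -/
open Real MeasureTheory

open Finset Topology

/-! Factor `(1 - w²)^(m - 1/2) = (1 - w)^(m - 1/2) (1 + w)^(m - 1/2)` and apply Leibniz' rule: the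
`i`-th derivative of `(1 ∓ w)^a` is `(∓1)^i a(a-1)⋯(a-i+1) (1 ∓ w)^(a-i)`, and after reflecting the
summation index the Leibniz sum is term by term `(-2)^n n! (1-x)^α (1+x)^β` times the sum defining
`P_n^{(α,β)}`. This is Rodrigues' formula, which holds for all real `α`, `β`. -/

lemma genBinom_eq_descPochhammer_eval (a : ℝ) (j : ℕ) :
    genBinom a j = (descPochhammer ℝ j).eval a / j.factorial := by
  rw [genBinom, descPochhammer_eval_eq_prod_range]

lemma iteratedDeriv_rpow_const (n : ℕ) (a x : ℝ) :
    iteratedDeriv n (fun y : ℝ => y ^ a) x = (descPochhammer ℝ n).eval a * x ^ (a - n) := by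
  rw [iteratedDeriv_eq_iterate, Real.iter_deriv_rpow_const]

lemma iteratedDeriv_one_sub_rpow (n : ℕ) (a x : ℝ) :
    iteratedDeriv n (fun w : ℝ => (1 - w) ^ a) x
      = (-1) ^ n * (descPochhammer ℝ n).eval a * (1 - x) ^ (a - n) := by
  simp only [iteratedDeriv_comp_const_sub n (fun y : ℝ => y ^ a), iteratedDeriv_rpow_const,
    smul_eq_mul, mul_assoc]

lemma iteratedDeriv_one_add_rpow (n : ℕ) (a x : ℝ) :
    iteratedDeriv n (fun w : ℝ => (1 + w) ^ a) x
      = (descPochhammer ℝ n).eval a * (1 + x) ^ (a - n) := by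
  simp only [iteratedDeriv_comp_const_add n (fun y : ℝ => y ^ a), iteratedDeriv_rpow_const]

lemma one_sub_sq_rpow {w : ℝ} (hw₁ : -1 ≤ w) (hw₂ : w ≤ 1) (a : ℝ) :
    (1 - w ^ 2) ^ a = (1 - w) ^ a * (1 + w) ^ a := by
  rw [← mul_rpow (by linarith) (by linarith)]
  ring_nf

lemma iteratedDeriv_one_sub_rpow_mul_one_add_rpow (n : ℕ) (a b : ℝ) {x : ℝ}
    (hx₁ : -1 < x) (hx₂ : x < 1) :
    iteratedDeriv n (fun w : ℝ => (1 - w) ^ a * (1 + w) ^ b) x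
      = ∑ i ∈ range (n + 1), n.choose i * (-1) ^ i * (descPochhammer ℝ i).eval a *
          (descPochhammer ℝ (n - i)).eval b * ((1 - x) ^ (a - i) * (1 + x) ^ (b - (n - i : ℕ))) := by
  have hsub : ContDiffAt ℝ n (fun w : ℝ => (1 - w) ^ a) x :=
    (Real.contDiffAt_rpow_const_of_ne (by linarith)).comp x (contDiffAt_const.sub contDiffAt_id)
  have hadd : ContDiffAt ℝ n (fun w : ℝ => (1 + w) ^ b) x :=
    (Real.contDiffAt_rpow_const_of_ne (by linarith)).comp x (contDiffAt_const.add contDiffAt_id)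
  rw [iteratedDeriv_fun_mul hsub hadd]
  refine sum_congr rfl fun i _ => ?_
  rw [iteratedDeriv_one_sub_rpow, iteratedDeriv_one_add_rpow]
  ring

theorem jacobiP_rodrigues (n : ℕ) (α β : ℝ) {x : ℝ} (hx₁ : -1 < x) (hx₂ : x < 1) :
    iteratedDeriv n (fun w : ℝ => (1 - w) ^ ((n : ℝ) + α) * (1 + w) ^ ((n : ℝ) + β)) x
      = (-2) ^ n * n.factorial * ((1 - x) ^ α * (1 + x) ^ β) * jacobiP α β n x := by
  have h₁ : 0 < 1 - x := by linarith
  have h₂ : 0 < 1 + x := by linarith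
  rw [iteratedDeriv_one_sub_rpow_mul_one_add_rpow n _ _ hx₁ hx₂, jacobiP, mul_sum,
    ← sum_range_reflect]
  refine sum_congr rfl fun k hk => ?_
  obtain ⟨j, rfl⟩ := Nat.exists_eq_add_of_le (Nat.lt_succ_iff.mp (mem_range.mp hk))
  simp only [Nat.add_sub_cancel, Nat.add_sub_cancel_left, genBinom_eq_descPochhammer_eval]
  rw [← Nat.choose_symm_add, Nat.cast_add_choose]
  have hminus : (1 - x) ^ ((↑(k + j) : ℝ) + α - j) = (1 - x) ^ α * (1 - x) ^ k := by
    rw [← rpow_natCast, ← rpow_add h₁]; push_cast; ring_nf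
  have hplus : (1 + x) ^ ((↑(k + j) : ℝ) + β - k) = (1 + x) ^ β * (1 + x) ^ j := by
    rw [← rpow_natCast, ← rpow_add h₂]; push_cast; ring_nf
  have hscale : (-2 : ℝ) ^ (k + j) * (((x - 1) / 2) ^ k * ((x + 1) / 2) ^ j)
      = (-1) ^ j * ((1 - x) ^ k * (1 + x) ^ j) := by
    rw [pow_add, mul_mul_mul_comm, ← mul_pow, ← mul_pow, mul_left_comm, ← mul_pow]
    congr 2 <;> ring
  set A := (descPochhammer ℝ j).eval ((↑(k + j) : ℝ) + α)
  set B := (descPochhammer ℝ k).eval ((↑(k + j) : ℝ) + β)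
  rw [hminus, hplus]
  field_simp
  linear_combination -(A * B) * hscale

theorem statement_9_general (m : ℕ) (v : ℝ) (hv1 : -1 < v) (hv2 : v < 1) :
    iteratedDeriv m (fun w : ℝ => (1 - w ^ 2) ^ ((m : ℝ) - 1 / 2)) v
      = (-1 : ℝ) ^ m * 2 ^ m * (Nat.factorial m : ℝ) *
          (1 - v ^ 2) ^ (-(1 / 2) : ℝ) * jacobiP (-(1 / 2)) (-(1 / 2)) m v := by
  have hlocal : (fun w : ℝ => (1 - w ^ 2) ^ ((m : ℝ) - 1 / 2))
      =ᶠ[𝓝 v] fun w => (1 - w) ^ ((m : ℝ) + -(1 / 2)) * (1 + w) ^ ((m : ℝ) + -(1 / 2)) := by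
    filter_upwards [Ioo_mem_nhds hv1 hv2] with w hw
    rw [one_sub_sq_rpow hw.1.le hw.2.le, ← sub_eq_add_neg]
  rw [hlocal.iteratedDeriv_eq, jacobiP_rodrigues m _ _ hv1 hv2, one_sub_sq_rpow hv1.le hv2.le,
    neg_pow]

theorem statement_9 (m : ℕ) (hm : 0 < m) (v : ℝ) (hv1 : -1 < v) (hv2 : v < 1) :
    iteratedDeriv m (fun w : ℝ => (1 - w ^ 2) ^ ((m : ℝ) - 1 / 2)) v
      = (-1 : ℝ) ^ m * 2 ^ m * (Nat.factorial m : ℝ) *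
          (1 - v ^ 2) ^ (-(1 / 2) : ℝ) * jacobiP (-(1 / 2)) (-(1 / 2)) m v :=
  statement_9_general m v hv1 hv2
end

section
/- For every real a > −1, every real λ > 0, every integer ℓ ≥ 1, and every real t ≠ 0, one has ∫_0^1 (1 − v²)^a · (1/(4t)) · ∂/∂t[C_{2ℓ}^{(λ)}(tv)] dv = (λ(λ+1)/(2(a+1))) · ∫_0^1 (1 − v²)^{a+1} · C_{2ℓ−2}^{(λ+2)}(tv) dv. -/
open Real MeasureTheory

/-!
Differentiating `C_{2ℓ}^{(λ)}(tv)` in `t` gives `2λ v C_{2ℓ-1}^{(λ+1)}(tv)`. The left-hand side is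
thus an integral of `(1 - v²)^a · v · f(v)` with `f(v) = C_{2ℓ-1}^{(λ+1)}(tv)`, and one integration
by parts against `(1 - v²)^(a+1)` moves the derivative onto `f`, giving
`2(λ+1) t C_{2ℓ-2}^{(λ+2)}(tv)`. There are no boundary terms: `(1 - v²)^(a+1)` vanishes at `v = 1`
since `a + 1 > 0`, and `f` vanishes at `v = 0` since `C_{2ℓ-1}` is odd.
-/

open Nat in
theorem hasDerivAt_gegenbauerC_succ (n : ℕ) {lam : ℝ} (hlam : Gamma lam ≠ 0) (x : ℝ) :
    HasDerivAt (gegenbauerC (n + 1) lam) (2 * lam * gegenbauerC n (lam + 1) x) x := by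
  unfold gegenbauerC
  refine (HasDerivAt.fun_sum (u := Finset.range ((n + 1) / 2 + 1)) fun k _ =>
    ((((hasDerivAt_id' x).const_mul (2 : ℝ)).fun_pow (n + 1 - 2 * k)).const_mul
      ((-1 : ℝ) ^ k * (Gamma (lam + (n + 1 : ℕ) - k) / (Gamma lam * k ! * (n + 1 - 2 * k)!))))
    ).congr_deriv ?_
  have hlam₀ : lam ≠ 0 := by rintro rfl; exact hlam Gamma_zero
  symm
  rw [Finset.mul_sum,
    ← Finset.sum_subset (Finset.range_subset_range.2 (by omega : n / 2 + 1 ≤ (n + 1) / 2 + 1))]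
  · refine Finset.sum_congr rfl fun k hk => ?_
    obtain ⟨j, rfl⟩ : ∃ j, n = 2 * k + j := ⟨n - 2 * k, by simp at hk; omega⟩
    rw [show 2 * k + j + 1 - 2 * k = j + 1 by omega, show 2 * k + j - 2 * k = j by omega,
      Nat.add_sub_cancel, Nat.factorial_succ, Gamma_add_one hlam₀]
    push_cast
    field_simp
    ring_nf
  · intro k hk hk'
    rw [show n + 1 - 2 * k = 0 by simp at hk hk'; omega]
    simp

@[fun_prop]
theorem continuous_gegenbauerC (m : ℕ) (lam : ℝ) : Continuous (gegenbauerC m lam) := by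
  unfold gegenbauerC
  fun_prop

theorem gegenbauerC_two_mul_add_one_zero (n : ℕ) (lam : ℝ) :
    gegenbauerC (2 * n + 1) lam 0 = 0 :=
  Finset.sum_eq_zero fun k hk => by
    rw [mul_zero, zero_pow (by simp at hk; omega), mul_zero]

theorem intervalIntegrable_one_sub_sq_rpow_mul {a : ℝ} (ha : -1 < a) {h : ℝ → ℝ}
    (hh : Continuous h) : IntervalIntegrable (fun v => (1 - v ^ 2) ^ a * h v) volume 0 1 := by
  have h_one_sub : IntervalIntegrable (fun v : ℝ => (1 - v) ^ a) volume 0 1 := by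
    simpa using
      ((intervalIntegral.intervalIntegrable_rpow' (a := 0) (b := 1) ha).comp_sub_left 1).symm
  have h_one_add : ContinuousOn (fun v : ℝ => (1 + v) ^ a * h v) (Set.uIcc 0 1) := by
    refine ContinuousOn.mul (ContinuousOn.rpow_const (by fun_prop) fun v hv => Or.inl ?_)
      hh.continuousOn
    rw [Set.uIcc_of_le zero_le_one] at hv
    linarith [hv.1]
  rw [intervalIntegrable_iff_integrableOn_Ioc_of_le zero_le_one]
  refine ((intervalIntegrable_iff_integrableOn_Ioc_of_le zero_le_one).1
    (h_one_sub.continuousOn_mul h_one_add)).congr_fun (fun v hv => ?_) measurableSet_Ioc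
  rw [show (1 - v ^ 2 : ℝ) = (1 - v) * (1 + v) by ring,
    mul_rpow (by linarith [hv.2]) (by linarith [hv.1])]
  ring

theorem integral_one_sub_sq_rpow_mul_id_mul {a : ℝ} (ha : -1 < a) {f f' : ℝ → ℝ}
    (hf : ∀ v, HasDerivAt f (f' v) v) (hf' : Continuous f') (hf₀ : f 0 = 0) :
    ∫ v in (0 : ℝ)..1, (1 - v ^ 2) ^ a * (v * f v)
      = (∫ v in (0 : ℝ)..1, (1 - v ^ 2) ^ (a + 1) * f' v) / (2 * (a + 1)) := by
  have ha₁ : 0 < a + 1 := by linarith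
  have hf_cont : Continuous f := continuous_iff_continuousAt.2 fun v => (hf v).continuousAt
  have hG : ∀ v ∈ Set.Ioo (0 : ℝ) 1, HasDerivAt (fun v => (1 - v ^ 2) ^ (a + 1) * f v)
      (-(2 * (a + 1)) * ((1 - v ^ 2) ^ a * (v * f v)) + (1 - v ^ 2) ^ (a + 1) * f' v) v := by
    intro v hv
    have hpos : 0 < 1 - v ^ 2 := by nlinarith [hv.1, hv.2]
    have hw := ((hasDerivAt_id' v).fun_pow 2).const_sub 1 |>.rpow_const (p := a + 1)
      (Or.inl hpos.ne')
    refine (hw.mul (hf v)).congr_deriv ?_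
    rw [add_sub_cancel_right]
    ring
  have hint₁ := intervalIntegrable_one_sub_sq_rpow_mul ha (h := fun v => v * f v) (by fun_prop)
  have hint₂ := intervalIntegrable_one_sub_sq_rpow_mul (a := a + 1) (by linarith) hf'
  have hFTC := intervalIntegral.integral_eq_sub_of_hasDerivAt_of_le zero_le_one
    (by fun_prop (disch := exact ha₁.le)) hG ((hint₁.const_mul _).add hint₂)
  rw [intervalIntegral.integral_add (hint₁.const_mul _) hint₂,
    intervalIntegral.integral_const_mul] at hFTC
  norm_num [zero_rpow ha₁.ne', hf₀] at hFTC
  rw [eq_div_iff (by positivity)]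
  linarith

theorem statement_12 (a : ℝ) (ha : -1 < a) (lam : ℝ) (hlam : 0 < lam) (l : ℕ) (hl : 1 ≤ l)
    (t : ℝ) (ht : t ≠ 0) :
    ∫ v in (0 : ℝ)..1,
        (1 - v ^ 2) ^ a * (1 / (4 * t)) * deriv (fun s => gegenbauerC (2 * l) lam (s * v)) t
      = (lam * (lam + 1) / (2 * (a + 1))) *
          ∫ v in (0 : ℝ)..1, (1 - v ^ 2) ^ (a + 1) * gegenbauerC (2 * l - 2) (lam + 2) (t * v) := by
  obtain ⟨n, rfl⟩ := Nat.exists_eq_add_of_le' hl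
  rw [show 2 * (n + 1) - 2 = 2 * n by omega]
  set f : ℝ → ℝ := fun v => gegenbauerC (2 * n + 1) (lam + 1) (t * v)
  set g : ℝ → ℝ := fun v => gegenbauerC (2 * n) (lam + 2) (t * v)
  have hderiv (v : ℝ) :
      deriv (fun s => gegenbauerC (2 * (n + 1)) lam (s * v)) t = 2 * lam * (v * f v) := by
    rw [show 2 * (n + 1) = 2 * n + 1 + 1 by ring]
    exact ((hasDerivAt_gegenbauerC_succ _ (Gamma_pos_of_pos hlam).ne' _).comp t
      (hasDerivAt_mul_const v)).deriv.trans (by simp only [f]; ring)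
  have hf (v : ℝ) : HasDerivAt f (2 * (lam + 1) * t * g v) v := by
    have h := (hasDerivAt_gegenbauerC_succ (2 * n) (lam := lam + 1)
      (Gamma_pos_of_pos (by linarith)).ne' (t * v)).comp v (hasDerivAt_const_mul t)
    rw [show lam + 1 + 1 = lam + 2 by ring] at h
    exact h.congr_deriv (by ring)
  have hparts := integral_one_sub_sq_rpow_mul_id_mul ha hf (by fun_prop)
    (by simp [f, gegenbauerC_two_mul_add_one_zero])
  calc _ = lam / (2 * t) * ∫ v in (0 : ℝ)..1, (1 - v ^ 2) ^ a * (v * f v) := by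
        rw [← intervalIntegral.integral_const_mul]
        refine intervalIntegral.integral_congr fun v _ => ?_
        rw [hderiv]
        field_simp
        ring
    _ = lam / (2 * t) *
          ((∫ v in (0 : ℝ)..1, (1 - v ^ 2) ^ (a + 1) * (2 * (lam + 1) * t * g v)) /
            (2 * (a + 1))) := by
        rw [hparts]
    _ = _ := by
        simp_rw [mul_left_comm _ (2 * (lam + 1) * t), intervalIntegral.integral_const_mul]
        field_simp
        ring
end

section
/- For all real parameters α > −1/2 and β > −1/2, every nonnegative integer n, and every real t with 0 ≤ t ≤ 1, one has P_n^{(α,β)}(1 − 2t²) = c_{α,β}^n · ∫_0^1 C_{2n}^{(α+β+1)}(tu) · (1 − u²)^{α − 1/2} du, where c_{α,β}^n = 2·(−1)^n·Γ(α+β+1)·Γ(n+α+1) / (√π·Γ(n+α+β+1)·Γ(α+1/2)). -/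
open Real MeasureTheory

section Aux
open Finset intervalIntegral Set

lemma smeval_descPoch (m : ℕ) (x : ℝ) :
    (descPochhammer ℤ m).smeval x = ∏ i ∈ Finset.range m, (x - i) := by
  induction m with
  | zero => simp [descPochhammer_zero]
  | succ m ih =>
    rw [descPochhammer_succ_right, Polynomial.smeval_mul, ih, Finset.prod_range_succ]
    congr 1
    simp [Polynomial.smeval_sub, Polynomial.smeval_X, Polynomial.smeval_natCast]

lemma vander_desc (x y : ℝ) (j : ℕ) :
    (∏ i ∈ Finset.range j, (x + y - i)) =
      ∑ k ∈ Finset.range (j + 1), (j.choose k : ℝ) *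
        ((∏ i ∈ Finset.range k, (x - i)) * ∏ i ∈ Finset.range (j - k), (y - i)) := by
  have h := Ring.descPochhammer_smeval_add (R := ℝ) (r := x) (s := y) j (Commute.all x y)
  rw [Finset.Nat.sum_antidiagonal_eq_sum_range_succ
      (fun a b => (j.choose a : ℝ) * ((descPochhammer ℤ a).smeval x * (descPochhammer ℤ b).smeval y))] at h
  simpa [smeval_descPoch] using h

lemma prod_desc_gamma (m : ℕ) (a : ℝ) (h : 0 < a + 1 - m) :
    (∏ i ∈ Finset.range m, (a - i)) = Real.Gamma (a + 1) / Real.Gamma (a + 1 - m) := by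
  induction m with
  | zero =>
    have : Real.Gamma (a+1) ≠ 0 := by
      refine (Real.Gamma_pos_of_pos ?_).ne'; simpa using h
    simp [div_self this]
  | succ m ih =>
    have hc : ((m+1 : ℕ) : ℝ) = (m:ℝ) + 1 := by push_cast; ring
    rw [hc] at h
    have hm : 0 < a + 1 - m := by linarith
    have hpos : (0:ℝ) < a - m := by linarith
    have hrec : Real.Gamma (a + 1 - m) = (a - m) * Real.Gamma (a - m) := by
      have := Real.Gamma_add_one hpos.ne'
      rw [show a - (m:ℝ) + 1 = a + 1 - m by ring] at this
      exact this
    have hg : Real.Gamma (a - m) ≠ 0 := (Real.Gamma_pos_of_pos hpos).ne'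
    rw [Finset.prod_range_succ, ih hm, hrec, hc,
      show a + 1 - ((m:ℝ) + 1) = a - m by ring]
    field_simp

lemma gamma_half_nat (j : ℕ) :
    Real.Gamma ((j:ℝ) + 1/2) = Real.sqrt π * (Nat.factorial (2*j)) / (4^j * Nat.factorial j) := by
  have h := Real.Gamma_mul_Gamma_add_half ((j:ℝ) + 1/2)
  have h1 : (j:ℝ) + 1/2 + 1/2 = ((j:ℕ):ℝ) + 1 := by ring
  have h2 : 2 * ((j:ℝ) + 1/2) = ((2*j : ℕ):ℝ) + 1 := by push_cast; ring
  rw [h1, h2, Real.Gamma_nat_eq_factorial, Real.Gamma_nat_eq_factorial] at h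
  have h4 : (2:ℝ) ^ (1 - (((2*j:ℕ):ℝ) + 1)) = (4^j : ℝ)⁻¹ := by
    rw [show (1 - (((2*j:ℕ):ℝ) + 1)) = -(2*(j:ℝ)) by push_cast; ring,
      Real.rpow_neg (by norm_num)]
    congr 1
    rw [show (2*(j:ℝ)) = ((2*j : ℕ) : ℝ) by push_cast; ring, Real.rpow_natCast, pow_mul]
    norm_num
  rw [h4] at h
  have hj : (Nat.factorial j : ℝ) ≠ 0 := by positivity
  have h4pos : ((4:ℝ)^j) ≠ 0 := by positivity
  field_simp at h ⊢
  nlinarith [h]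

lemma beta_complex_eq_real (a b : ℝ) :
    Complex.betaIntegral a b = ((∫ x in (0:ℝ)..1, x ^ (a-1) * (1-x) ^ (b-1) : ℝ) : ℂ) := by
  rw [Complex.betaIntegral, ← intervalIntegral.integral_ofReal]
  refine intervalIntegral.integral_congr (fun x hx => ?_)
  rw [Set.uIcc_of_le (by norm_num : (0:ℝ) ≤ 1)] at hx
  rw [show ((a:ℂ) - 1) = ((a - 1 : ℝ) : ℂ) by push_cast; ring,
    show (1 - (x:ℂ)) = ((1 - x : ℝ) : ℂ) by push_cast; ring,
    show ((b:ℂ) - 1) = ((b - 1 : ℝ) : ℂ) by push_cast; ring,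
    ← Complex.ofReal_cpow hx.1, ← Complex.ofReal_cpow (by linarith [hx.2] : (0:ℝ) ≤ 1 - x),
    ← Complex.ofReal_mul]

lemma betaReal (a b : ℝ) (ha : 0 < a) (hb : 0 < b) :
    ∫ x in (0:ℝ)..1, x ^ (a-1) * (1-x) ^ (b-1) = Real.Gamma a * Real.Gamma b / Real.Gamma (a+b) := by
  have h := Complex.Gamma_mul_Gamma_eq_betaIntegral
    (s := (a:ℂ)) (t := (b:ℂ)) (by simpa using ha) (by simpa using hb)
  rw [beta_complex_eq_real, Complex.Gamma_ofReal, Complex.Gamma_ofReal,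
    show ((a:ℂ) + b) = ((a + b : ℝ) : ℂ) by push_cast; ring, Complex.Gamma_ofReal,
    ← Complex.ofReal_mul, ← Complex.ofReal_mul] at h
  have h3 := Complex.ofReal_injective h
  have hG : Real.Gamma (a+b) ≠ 0 := (Real.Gamma_pos_of_pos (by linarith)).ne'
  field_simp
  rw [h3]; ring

lemma betaIntegrable (a b : ℝ) (ha : 0 < a) (hb : 0 < b) :
    IntegrableOn (fun x : ℝ => x ^ (a-1) * (1-x) ^ (b-1)) (Set.Icc (0:ℝ) 1) := by
  rw [integrableOn_Icc_iff_integrableOn_Ioc]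
  have h := Complex.betaIntegral_convergent
    (u := (a:ℂ)) (v := (b:ℂ)) (by simpa using ha) (by simpa using hb)
  rw [intervalIntegrable_iff, Set.uIoc_of_le (by norm_num : (0:ℝ) ≤ 1)] at h
  refine (h.re).congr ?_
  refine ((ae_restrict_mem measurableSet_Ioc).mono fun x hx => ?_)
  have h0 : (0:ℝ) ≤ x := hx.1.le
  have h1 : (0:ℝ) ≤ 1 - x := by linarith [hx.2]
  simp only
  rw [show ((a:ℂ) - 1) = ((a - 1 : ℝ) : ℂ) by push_cast; ring,
    show ((b:ℂ) - 1) = ((b - 1 : ℝ) : ℂ) by push_cast; ring,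
    show (1 - (x:ℂ)) = ((1 - x : ℝ) : ℂ) by push_cast; ring,
    ← Complex.ofReal_cpow h0, ← Complex.ofReal_cpow h1, ← Complex.ofReal_mul]
  rfl

lemma oneSubSqIntegrable (p : ℕ) (c : ℝ) (hc : -1 < c) :
    IntervalIntegrable (fun u : ℝ => u ^ p * (1 - u^2) ^ c) volume 0 1 := by
  have hbase : IntervalIntegrable (fun u : ℝ => (1 - u) ^ c) volume 0 1 := by
    have h := (intervalIntegral.intervalIntegrable_rpow' (a := 0) (b := 1) hc).comp_sub_left 1
    norm_num at h
    exact h.symm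
  set M : ℝ := max 1 ((2:ℝ) ^ c) with hM
  have hM0 : 0 < M := lt_of_lt_of_le one_pos (le_max_left _ _)
  refine ((hbase.const_mul M).mono_fun ?_ ?_)
  · apply Measurable.aestronglyMeasurable
    measurability
  · rw [Set.uIoc_of_le (by norm_num : (0:ℝ) ≤ 1)]
    refine ((ae_restrict_mem measurableSet_Ioc).mono fun u hu => ?_)
    have h0 : (0:ℝ) < u := hu.1
    have h1 : u ≤ 1 := hu.2
    have hsub : (0:ℝ) ≤ 1 - u := by linarith
    have hfac : (1 - u^2 : ℝ) = (1-u) * (1+u) := by ring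
    have h1u : (0:ℝ) ≤ 1 + u := by linarith
    have hrw : (1 - u^2 : ℝ) ^ c = (1-u)^c * (1+u)^c := by
      rw [hfac, Real.mul_rpow hsub h1u]
    have hup : u ^ p ≤ 1 := pow_le_one₀ h0.le h1
    have hupn : (0:ℝ) ≤ u ^ p := pow_nonneg h0.le p
    have hcb : (1+u)^c ≤ M := by
      rcases le_or_gt 0 c with hc0 | hc0
      · refine le_trans ?_ (le_max_right _ _)
        exact Real.rpow_le_rpow h1u (by linarith) hc0
      · refine le_trans ?_ (le_max_left _ _)
        exact Real.rpow_le_one_of_one_le_of_nonpos (by linarith) hc0.le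
    have hnn : (0:ℝ) ≤ (1 - u^2) ^ c := Real.rpow_nonneg (by nlinarith) c
    have hnn1 : (0:ℝ) ≤ (1-u)^c := Real.rpow_nonneg hsub c
    have hnn2 : (0:ℝ) ≤ (1+u)^c := Real.rpow_nonneg h1u c
    simp only [Real.norm_eq_abs]
    rw [abs_of_nonneg (by positivity), abs_of_nonneg (by positivity)]
    calc u ^ p * (1 - u^2) ^ c ≤ 1 * ((1-u)^c * (1+u)^c) := by
          rw [hrw]; exact mul_le_mul hup le_rfl (by positivity) zero_le_one
      _ ≤ M * (1-u)^c := by rw [one_mul, mul_comm M]; exact mul_le_mul_of_nonneg_left hcb hnn1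

lemma Jval (m : ℕ) (α : ℝ) (hα : -1/2 < α) :
    ∫ u in (0:ℝ)..1, u ^ (2*m) * (1 - u^2) ^ (α - 1/2)
      = Real.Gamma ((m:ℝ) + 1/2) * Real.Gamma (α + 1/2) / (2 * Real.Gamma ((m:ℝ) + α + 1)) := by
  set a : ℝ := (m:ℝ) + 1/2 with ha_def
  set b : ℝ := α + 1/2 with hb_def
  have ha : 0 < a := by positivity
  have hb : 0 < b := by simp only [hb_def]; linarith
  set g : ℝ → ℝ := fun y => y ^ (a-1) * (1-y) ^ (b-1) with hg_def
  -- pointwise identity on Ioc 0 1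
  have key : ∀ x ∈ Ioc (0:ℝ) 1, (2*x) • g (x^2) = 2 * (x ^ (2*m) * (1 - x^2) ^ (α - 1/2)) := by
    intro x hx
    have hx0 : (0:ℝ) < x := hx.1
    have hxx : (x^2 : ℝ) ^ (a - 1) = x ^ (2*m-1 : ℝ) := by
      rw [← Real.rpow_natCast x 2, ← Real.rpow_mul hx0.le]
      congr 1
      push_cast [ha_def]; ring
    have hxm : x * x ^ (2*m-1 : ℝ) = x ^ (2*m) := by
      have hh : (1:ℝ) + (2*(m:ℝ) - 1) = ((2*m : ℕ):ℝ) := by push_cast; ring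
      calc x * x ^ (2*(m:ℝ)-1 : ℝ) = x^(1:ℝ) * x ^ (2*(m:ℝ)-1 : ℝ) := by rw [Real.rpow_one]
        _ = x ^ ((1:ℝ) + (2*(m:ℝ)-1)) := (Real.rpow_add hx0 _ _).symm
        _ = x ^ (((2*m:ℕ)):ℝ) := by rw [hh]
        _ = x ^ (2*m) := Real.rpow_natCast x (2*m)
    have hb1 : b - 1 = α - 1/2 := by rw [hb_def]; ring
    simp only [hg_def, smul_eq_mul, hxx, hb1]
    calc 2 * x * (x ^ (2*m-1:ℝ) * (1 - x^2) ^ (α - 1/2))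
        = 2 * ((x * x ^ (2*m-1:ℝ)) * (1 - x^2) ^ (α - 1/2)) := by ring
      _ = 2 * (x ^ (2*m) * (1 - x^2) ^ (α - 1/2)) := by rw [hxm]
  have base : IntervalIntegrable (fun u : ℝ => 2 * (u ^ (2*m) * (1 - u^2) ^ (α-1/2))) volume 0 1 :=
    (oneSubSqIntegrable (2*m) (α-1/2) (by linarith)).const_mul 2
  have hsub : (∫ x in (0:ℝ)..1, (2*x) • g (x^2)) = ∫ y in (0:ℝ)..1, g y := by
    have := intervalIntegral.integral_comp_smul_deriv''' (a := (0:ℝ)) (b := 1)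
      (f := fun x => x^2) (f' := fun x => 2*x) (g := g)
      ((continuous_pow 2).continuousOn)
      (fun x hx => by
        simpa using (hasDerivAt_pow 2 x).hasDerivWithinAt.mono (Set.subset_univ _))
      ?_ ?_ ?_
    · simpa using this
    · -- continuity of g on image of Ioo
      refine ContinuousOn.mono (s := Ioo (0:ℝ) 1) ?_ ?_
      · intro y hy
        have h1 : y ≠ 0 := hy.1.ne'
        have h2 : (1:ℝ) - y ≠ 0 := by intro h; have := hy.2; nlinarith [hy.2]
        apply ContinuousAt.continuousWithinAt
        exact (Real.continuousAt_rpow_const y (a-1) (Or.inl h1)).mul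
          ((Real.continuousAt_rpow_const (1-y) (b-1) (Or.inl h2)).comp
            ((continuous_const.sub continuous_id).continuousAt))
      · rintro z ⟨x, hx, rfl⟩
        simp only [Set.mem_Ioo] at hx ⊢
        norm_num at hx
        exact ⟨pow_pos hx.1 2, by nlinarith [hx.1, hx.2]⟩

    · refine (betaIntegrable a b ha hb).mono_set ?_
      rintro z ⟨x, hx, rfl⟩
      rw [Set.uIcc_of_le (by norm_num : (0:ℝ) ≤ 1)] at hx
      simp only [Set.mem_Icc] at hx ⊢
      exact ⟨by positivity, by nlinarith [hx.1, hx.2]⟩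
    · rw [Set.uIcc_of_le (by norm_num : (0:ℝ) ≤ 1),
        integrableOn_Icc_iff_integrableOn_Ioc]
      have hb2 := base
      rw [intervalIntegrable_iff, Set.uIoc_of_le (by norm_num : (0:ℝ) ≤ 1)] at hb2
      refine hb2.congr ?_
      exact (ae_restrict_mem measurableSet_Ioc).mono fun x hx => (key x hx).symm
  have hL : (∫ x in (0:ℝ)..1, (2*x) • g (x^2))
      = 2 * ∫ u in (0:ℝ)..1, u ^ (2*m) * (1 - u^2) ^ (α - 1/2) := by
    rw [← intervalIntegral.integral_const_mul]
    refine intervalIntegral.integral_congr_ae ?_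
    rw [Set.uIoc_of_le (by norm_num : (0:ℝ) ≤ 1)]
    exact MeasureTheory.ae_of_all _ fun x hx => key x hx
  have hR : (∫ y in (0:ℝ)..1, g y) = Real.Gamma a * Real.Gamma b / Real.Gamma (a+b) :=
    betaReal a b ha hb
  have : (2:ℝ) * ∫ u in (0:ℝ)..1, u ^ (2*m) * (1 - u^2) ^ (α - 1/2)
      = Real.Gamma a * Real.Gamma b / Real.Gamma (a+b) := by
    rw [← hL, hsub, hR]
  rw [show (m:ℝ) + α + 1 = a + b by rw [ha_def, hb_def]; ring]
  have hGpos : (0:ℝ) < Real.Gamma (a+b) := Real.Gamma_pos_of_pos (by positivity)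
  rw [eq_div_iff (by positivity : (2:ℝ) * Real.Gamma (a+b) ≠ 0)]
  have := this
  field_simp at this ⊢
  nlinarith [this]

lemma tri_sum (n : ℕ) (f : ℕ → ℕ → ℝ) :
    ∑ k ∈ Finset.range (n+1), ∑ i ∈ Finset.range (n+1-k), f k i
      = ∑ j ∈ Finset.range (n+1), ∑ k ∈ Finset.range (j+1), f k (j-k) := by
  rw [Finset.sum_sigma', Finset.sum_sigma']
  refine Finset.sum_nbij' (fun p => ⟨p.1 + p.2, p.1⟩) (fun p => ⟨p.2, p.1 - p.2⟩) ?_ ?_ ?_ ?_ ?_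
  · rintro ⟨k, i⟩ hp
    simp only [Finset.mem_sigma, Finset.mem_range] at hp ⊢
    omega
  · rintro ⟨j, k⟩ hp
    simp only [Finset.mem_sigma, Finset.mem_range] at hp ⊢
    omega
  · rintro ⟨k, i⟩ hp
    simp only [Finset.mem_sigma, Finset.mem_range] at hp
    apply Sigma.ext <;> simp <;> omega
  · rintro ⟨j, k⟩ hp
    simp only [Finset.mem_sigma, Finset.mem_range] at hp
    apply Sigma.ext <;> simp <;> omega
  · rintro ⟨k, i⟩ hp
    simp only [Finset.mem_sigma, Finset.mem_range] at hp
    simp only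
    congr 1
    omega

lemma coeff_eq (α β : ℝ) (hα : -1/2 < α) (hβ : -1/2 < β) (n j : ℕ) (hj : j ≤ n) :
    ∑ k ∈ Finset.range (j+1),
      genBinom ((n:ℝ)+α) (n-k) * genBinom ((n:ℝ)+β) k * ((n-k).choose (j-k) : ℝ)
    = Real.Gamma ((n:ℝ)+α+1) * Real.Gamma ((n:ℝ)+j+α+β+1)
      / (Real.Gamma ((n:ℝ)+α+β+1) * (Nat.factorial (n-j)) * (Nat.factorial j)
          * Real.Gamma ((j:ℝ)+α+1)) := by
  have hab : (0:ℝ) < (n:ℝ)+α+β+1 := by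
    have : (0:ℕ) ≤ n := Nat.zero_le n
    push_cast; nlinarith [Nat.cast_nonneg (α := ℝ) n]
  have hGab : Real.Gamma ((n:ℝ)+α+β+1) ≠ 0 := (Real.Gamma_pos_of_pos hab).ne'
  have hprod : (∏ i ∈ Finset.range j, ((n:ℝ)+β+((j:ℝ)+α) - i))
      = Real.Gamma ((n:ℝ)+j+α+β+1) / Real.Gamma ((n:ℝ)+α+β+1) := by
    rw [prod_desc_gamma j _ (by push_cast; nlinarith [Nat.cast_nonneg (α := ℝ) n])]
    congr 1 <;> ring
  have key := vander_desc ((n:ℝ)+β) ((j:ℝ)+α) j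
  rw [hprod] at key
  have E : Real.Gamma ((n:ℝ)+j+α+β+1)
      = (∑ k ∈ Finset.range (j+1), (j.choose k : ℝ) *
          ((∏ i ∈ Finset.range k, ((n:ℝ)+β - i)) * ∏ i ∈ Finset.range (j-k), ((j:ℝ)+α - i)))
        * Real.Gamma ((n:ℝ)+α+β+1) := by
    rw [← key]; field_simp
  rw [E, Finset.sum_mul, Finset.mul_sum, Finset.sum_div]
  refine Finset.sum_congr rfl fun k hk => ?_
  have hkj : k ≤ j := Nat.lt_succ_iff.mp (Finset.mem_range.mp hk)
  have hkn : k ≤ n := le_trans hkj hj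
  have hka : (0:ℝ) < (k:ℝ)+α+1 := by nlinarith [Nat.cast_nonneg (α := ℝ) k]
  have hGka : Real.Gamma ((k:ℝ)+α+1) ≠ 0 := (Real.Gamma_pos_of_pos hka).ne'
  have hGja : Real.Gamma ((j:ℝ)+α+1) ≠ 0 := by
    refine (Real.Gamma_pos_of_pos ?_).ne'; nlinarith [Nat.cast_nonneg (α := ℝ) j]
  -- rewrite genBinom (n+α) (n-k)
  have e1 : (∏ i ∈ Finset.range (n-k), ((n:ℝ)+α - i))
      = Real.Gamma ((n:ℝ)+α+1) / Real.Gamma ((k:ℝ)+α+1) := by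
    rw [prod_desc_gamma (n-k) ((n:ℝ)+α)
      (by rw [Nat.cast_sub hkn]; push_cast; linarith)]
    congr 1
    rw [Nat.cast_sub hkn]; ring
  have e2 : (∏ i ∈ Finset.range (j-k), ((j:ℝ)+α - i))
      = Real.Gamma ((j:ℝ)+α+1) / Real.Gamma ((k:ℝ)+α+1) := by
    rw [prod_desc_gamma (j-k) ((j:ℝ)+α)
      (by rw [Nat.cast_sub hkj]; push_cast; linarith)]
    congr 1
    rw [Nat.cast_sub hkj]; ring
  have e3 : (((n-k).choose (j-k) : ℕ) : ℝ)
      = (Nat.factorial (n-k)) / ((Nat.factorial (j-k)) * (Nat.factorial (n-j))) := by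
    have hnn : n-k-(j-k) = n-j := by omega
    rw [Nat.cast_choose ℝ (by omega : j-k ≤ n-k), hnn]
  have e4 : ((j.choose k : ℕ) : ℝ)
      = (Nat.factorial j) / ((Nat.factorial k) * (Nat.factorial (j-k))) := by
    rw [Nat.cast_choose ℝ hkj]
  have fne : ∀ m : ℕ, ((Nat.factorial m : ℕ) : ℝ) ≠ 0 := fun m => by
    exact_mod_cast (Nat.factorial_pos m).ne'
  rw [genBinom, genBinom, e1, e2, e3, e4]
  field_simp

noncomputable def auxS (α β t : ℝ) (n : ℕ) : ℝ :=
  ∑ j ∈ Finset.range (n+1),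
    (-1:ℝ)^j * Real.Gamma ((n:ℝ)+α+1) * Real.Gamma ((n:ℝ)+j+α+β+1)
      / (Real.Gamma ((n:ℝ)+α+β+1) * (Nat.factorial (n-j)) * (Nat.factorial j)
          * Real.Gamma ((j:ℝ)+α+1)) * t^(2*j)

lemma partA (α β : ℝ) (hα : -1/2 < α) (hβ : -1/2 < β) (n : ℕ) (t : ℝ) :
    jacobiP α β n (1 - 2*t^2) = auxS α β t n := by
  unfold jacobiP
  have step1 : ∀ k ∈ Finset.range (n+1),
      genBinom ((n:ℝ)+α) (n-k) * genBinom ((n:ℝ)+β) k *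
        ((1-2*t^2 - 1)/2)^k * ((1-2*t^2+1)/2)^(n-k)
      = ∑ i ∈ Finset.range (n+1-k),
          genBinom ((n:ℝ)+α) (n-k) * genBinom ((n:ℝ)+β) k *
            ((n-k).choose i : ℝ) * (-t^2)^(k+i) := by
    intro k hk
    have hkn : k ≤ n := Nat.lt_succ_iff.mp (Finset.mem_range.mp hk)
    have h1 : ((1-2*t^2-1)/2 : ℝ) = -t^2 := by ring
    have h2 : ((1-2*t^2+1)/2 : ℝ) = (-t^2) + 1 := by ring
    rw [h1, h2, add_pow]
    rw [show n+1-k = (n-k)+1 by omega, Finset.mul_sum]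
    refine Finset.sum_congr rfl fun i hi => ?_
    rw [pow_add]
    ring
  rw [Finset.sum_congr rfl step1, tri_sum n
    (fun k i => genBinom ((n:ℝ)+α) (n-k) * genBinom ((n:ℝ)+β) k *
      ((n-k).choose i : ℝ) * (-t^2)^(k+i))]
  unfold auxS
  refine Finset.sum_congr rfl fun j hj => ?_
  have hjn : j ≤ n := Nat.lt_succ_iff.mp (Finset.mem_range.mp hj)
  have step2 : ∀ k ∈ Finset.range (j+1),
      genBinom ((n:ℝ)+α) (n-k) * genBinom ((n:ℝ)+β) k *
        ((n-k).choose (j-k) : ℝ) * (-t^2)^(k+(j-k))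
      = genBinom ((n:ℝ)+α) (n-k) * genBinom ((n:ℝ)+β) k *
        ((n-k).choose (j-k) : ℝ) * (-t^2)^j := by
    intro k hk
    have hkj : k ≤ j := Nat.lt_succ_iff.mp (Finset.mem_range.mp hk)
    have : k + (j-k) = j := by omega
    rw [this]
  rw [Finset.sum_congr rfl step2, ← Finset.sum_mul, coeff_eq α β hα hβ n j hjn]
  rw [show ((-t^2 : ℝ))^j = (-1:ℝ)^j * t^(2*j) by rw [pow_mul, neg_pow]]
  ring

lemma partB (α β : ℝ) (hα : -1/2 < α) (hβ : -1/2 < β) (n : ℕ) (t : ℝ) :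
    (2 * (-1 : ℝ) ^ n * Real.Gamma (α + β + 1) * Real.Gamma ((n : ℝ) + α + 1)) /
        (Real.sqrt π * Real.Gamma ((n : ℝ) + α + β + 1) * Real.Gamma (α + 1 / 2)) *
        ∫ u in (0 : ℝ)..1,
          gegenbauerC (2 * n) (α + β + 1) (t * u) * (1 - u ^ 2) ^ (α - 1 / 2)
      = auxS α β t n := by
  have hc : (-1 : ℝ) < α - 1/2 := by linarith
  -- Step 1: rewrite the integrand as a finite sum
  have hint : ∀ u : ℝ,
      gegenbauerC (2 * n) (α + β + 1) (t * u) * (1 - u ^ 2) ^ (α - 1 / 2)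
      = ∑ k ∈ Finset.range (n+1),
          ((-1:ℝ)^k * (Real.Gamma (α + β + 1 + (2*n : ℕ) - k) /
            (Real.Gamma (α + β + 1) * (Nat.factorial k) * (Nat.factorial (2*n - 2*k))))
            * (2*t)^(2*n - 2*k))
          * (u ^ (2*n - 2*k) * (1 - u^2) ^ (α - 1/2)) := by
    intro u
    unfold gegenbauerC
    rw [show (2*n)/2 + 1 = n + 1 by omega, Finset.sum_mul]
    refine Finset.sum_congr rfl fun k hk => ?_
    rw [show 2*(t*u) = (2*t)*u by ring, mul_pow]
    ring
  rw [intervalIntegral.integral_congr (g :=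
      fun u => ∑ k ∈ Finset.range (n+1),
        ((-1:ℝ)^k * (Real.Gamma (α + β + 1 + (2*n : ℕ) - k) /
          (Real.Gamma (α + β + 1) * (Nat.factorial k) * (Nat.factorial (2*n - 2*k))))
          * (2*t)^(2*n - 2*k))
        * (u ^ (2*n - 2*k) * (1 - u^2) ^ (α - 1/2)))
    (fun u _ => hint u)]
  rw [intervalIntegral.integral_finset_sum
    (fun k _ => ((oneSubSqIntegrable (2*n-2*k) (α-1/2) hc).const_mul _))]
  -- Step 2: evaluate each integral
  have step2 : ∀ k ∈ Finset.range (n+1),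
      (∫ u in (0:ℝ)..1,
        ((-1:ℝ)^k * (Real.Gamma (α + β + 1 + (2*n : ℕ) - k) /
          (Real.Gamma (α + β + 1) * (Nat.factorial k) * (Nat.factorial (2*n - 2*k))))
          * (2*t)^(2*n - 2*k))
        * (u ^ (2*n - 2*k) * (1 - u^2) ^ (α - 1/2)))
      = ((-1:ℝ)^k * (Real.Gamma (α + β + 1 + (2*n : ℕ) - k) /
          (Real.Gamma (α + β + 1) * (Nat.factorial k) * (Nat.factorial (2*n - 2*k))))
          * (2*t)^(2*n - 2*k))
        * (Real.Gamma (((n-k : ℕ):ℝ) + 1/2) * Real.Gamma (α + 1/2)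
            / (2 * Real.Gamma (((n-k : ℕ):ℝ) + α + 1))) := by
    intro k hk
    have hkn : k ≤ n := Nat.lt_succ_iff.mp (Finset.mem_range.mp hk)
    rw [intervalIntegral.integral_const_mul, show 2*n - 2*k = 2*(n-k) by omega,
      Jval (n-k) α hα]
  rw [Finset.sum_congr rfl step2]
  -- Step 3: reflect the sum
  rw [← Finset.sum_range_reflect]
  unfold auxS
  rw [Finset.mul_sum]
  refine Finset.sum_congr rfl fun j hj => ?_
  have hjn : j ≤ n := Nat.lt_succ_iff.mp (Finset.mem_range.mp hj)
  -- clean up nat subtractions with k := n + 1 - 1 - j = n - j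
  rw [show n + 1 - 1 - j = n - j by omega]
  rw [show 2*n - 2*(n-j) = 2*j by omega, show n - (n-j) = j by omega]
  rw [show ((n - j : ℕ):ℝ) = (n:ℝ) - j from by rw [Nat.cast_sub hjn]]
  rw [show ((2*n : ℕ):ℝ) = 2*(n:ℝ) from by push_cast; ring]
  rw [gamma_half_nat j]
  -- gamma argument normalizations
  rw [show α + β + 1 + 2*(n:ℝ) - ((n:ℝ) - j) = (n:ℝ) + (j:ℝ) + α + β + 1 by ring]
  -- sign
  have hsign : (-1:ℝ)^(n-j) * (-1:ℝ)^n = (-1:ℝ)^j := by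
    rw [← pow_add, show n - j + n = j + 2*(n-j) by omega, pow_add, pow_mul]
    norm_num
  -- powers of t
  have hpow : ((2*t) : ℝ)^(2*j) = 4^j * t^(2*j) := by
    rw [pow_mul, pow_mul, show ((2*t):ℝ)^2 = 4 * t^2 by ring, mul_pow]
  rw [hpow]
  -- nonzero facts
  have hπ : Real.sqrt π ≠ 0 := by positivity
  have hab : (0:ℝ) < α + β + 1 := by linarith
  have hG1 : Real.Gamma (α+β+1) ≠ 0 := (Real.Gamma_pos_of_pos hab).ne'
  have hG2 : Real.Gamma ((n:ℝ)+α+β+1) ≠ 0 := by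
    refine (Real.Gamma_pos_of_pos ?_).ne'; have := Nat.cast_nonneg (α := ℝ) n; linarith
  have hG3 : Real.Gamma (α+1/2) ≠ 0 := by
    refine (Real.Gamma_pos_of_pos ?_).ne'; linarith
  have hG4 : Real.Gamma ((j:ℝ)+α+1) ≠ 0 := by
    refine (Real.Gamma_pos_of_pos ?_).ne'; have := Nat.cast_nonneg (α := ℝ) j; linarith
  have f1 : ((Nat.factorial (n-j) : ℕ):ℝ) ≠ 0 := by
    exact_mod_cast (Nat.factorial_pos _).ne'
  have f2 : ((Nat.factorial j : ℕ):ℝ) ≠ 0 := by exact_mod_cast (Nat.factorial_pos _).ne'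
  have f3 : ((Nat.factorial (2*j) : ℕ):ℝ) ≠ 0 := by exact_mod_cast (Nat.factorial_pos _).ne'
  have h4 : ((4:ℝ)^j) ≠ 0 := by positivity
  -- final algebra
  rw [← hsign]
  set S := Real.sqrt π with hS
  set G1 := Real.Gamma (α+β+1) with hG1d
  set G2 := Real.Gamma ((n:ℝ)+α+β+1) with hG2d
  set G3 := Real.Gamma (α+1/2) with hG3d
  set G4 := Real.Gamma ((j:ℝ)+α+1) with hG4d
  set G5 := Real.Gamma ((n:ℝ)+(j:ℝ)+α+β+1) with hG5d
  set G6 := Real.Gamma ((n:ℝ)+α+1) with hG6d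
  set F1 := ((Nat.factorial (n-j) : ℕ):ℝ) with hF1d
  set F2 := ((Nat.factorial j : ℕ):ℝ) with hF2d
  set F3 := ((Nat.factorial (2*j) : ℕ):ℝ) with hF3d
  field_simp

end Aux

theorem statement_13 (α β : ℝ) (hα : -1/2 < α) (hβ : -1/2 < β) (n : ℕ)
    (t : ℝ) (ht1 : 0 ≤ t) (ht2 : t ≤ 1) :
    jacobiP α β n (1 - 2 * t ^ 2)
      = (2 * (-1 : ℝ) ^ n * Real.Gamma (α + β + 1) * Real.Gamma ((n : ℝ) + α + 1)) /
          (Real.sqrt π * Real.Gamma ((n : ℝ) + α + β + 1) * Real.Gamma (α + 1 / 2)) *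
          ∫ u in (0 : ℝ)..1,
            gegenbauerC (2 * n) (α + β + 1) (t * u) * (1 - u ^ 2) ^ (α - 1 / 2) := by
  rw [partA α β hα hβ n t, ← partB α β hα hβ n t]
end
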